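/- arXiv:1403.3489 — 6 statements merged into one kernel-verified Lean document; each statement's English description precedes it below -/
import Mathlib

section
/- Let m, N, p ≥ 1 be integers and let a = (a₁,…,a_m), u = (u₁,…,u_m) be vectors of positive integers such that Σ_{i=1}^m aᵢuᵢ = p·N and aᵢ > p²·(Σ_{j=1}^m uⱼ)·(Π_{j=1}^m uⱼ) for every i. Then a is (N,u)-rearrangeable if and only if gcd(u₁,…,u_m) divides N; moreover, in this case the rearranging matrix C can be chosen to have exactly p rows. -/
/-- `a` is `(N, u)`-rearrangeable: there is a `p × m` matrix `C` of nonnegative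
integers whose column sums match `a` and whose rows all have `u`-weighted sum `N`. -/
def IsRearrangeable {m : ℕ} (N : ℕ) (u a : Fin m → ℕ) : Prop :=
  ∃ p : ℕ, 1 ≤ p ∧ ∃ C : Fin p → Fin m → ℕ,
    (∀ j, ∑ s, C s j = a j) ∧ (∀ s, ∑ j, C s j * u j = N)

/-!
Rows are peeled off one at a time. With `q = p + 1` rows still to build, round `a / q` down
coordinatewise; the shortfall `D` of its `u`-weight from `N` is a multiple of `gcd u` with
`0 ≤ q D ≤ (q - 1) ∑ u`. Bézout coefficients for `gcd u` bounded by `∏ u` turn this into a row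
`c` of weight exactly `N` with `|q c - a| ≤ (q - 1) ((∑ u) (∏ u) + 1)` coordinatewise, and the
hypothesis `a > q² (∑ u) (∏ u)` then passes to `a - c`, with `p` in place of `q`.
Conversely, every row weight is a combination of the `u i`.
-/

open Finset

theorem Nat.exists_mul_add_mul_eq_gcd_abs_le {a b : ℕ} (ha : 0 < a) (hb : 0 < b) :
    ∃ α β : ℤ, α * a + β * b = a.gcd b ∧ |α| ≤ b ∧ |β| ≤ a := by
  -- Reducing the Bézout coefficient of `a` modulo `b` bounds both coefficients.
  set A := a.gcdA b
  have hbez : (a.gcd b : ℤ) = a * A + b * a.gcdB b := Nat.gcd_eq_gcd_ab a b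
  have hmod := Int.emod_add_mul_ediv A b
  have hA0 : 0 ≤ A % b := Int.emod_nonneg _ (by positivity)
  have hAb : A % b < b := Int.emod_lt_of_pos _ (by positivity)
  have hg0 : 0 < (a.gcd b : ℤ) := by exact_mod_cast Nat.gcd_pos_of_pos_left b ha
  have hgb : (a.gcd b : ℤ) ≤ b := by exact_mod_cast Nat.le_of_dvd hb (Nat.gcd_dvd_right a b)
  have hsum : A % b * a + (a.gcdB b + a * (A / b)) * b = a.gcd b := by
    rw [hbez]; linear_combination (a : ℤ) * hmod
  refine ⟨A % b, a.gcdB b + a * (A / b), hsum, abs_le.2 ⟨by linarith, hAb.le⟩,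
    abs_le.2 ⟨?_, ?_⟩⟩ <;> nlinarith

theorem Finset.exists_sum_mul_eq_gcd_abs_le_prod {ι : Type*} (u : ι → ℕ) {s : Finset ι}
    (hs : s.Nonempty) (hu : ∀ i ∈ s, 0 < u i) :
    ∃ x : ι → ℤ, ∑ i ∈ s, x i * u i = s.gcd u ∧ ∀ i ∈ s, |x i| ≤ ∏ i ∈ s, (u i : ℤ) := by
  classical
  induction hs using Finset.Nonempty.cons_induction with
  | singleton a =>
    refine ⟨fun _ => 1, by simp, fun i hi => ?_⟩
    rw [mem_singleton] at hi
    subst hi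
    simpa [Nat.one_le_iff_ne_zero] using (hu i (mem_singleton_self i)).ne'
  | cons a s ha hs ih =>
    have hua : 0 < u a := hu a (mem_cons_self a s)
    have hus : ∀ i ∈ s, 0 < u i := fun i hi => hu i (mem_cons_of_mem hi)
    obtain ⟨y, hy, hyP⟩ := ih hus
    obtain ⟨i₀, hi₀⟩ := hs
    have hgP : s.gcd u ≤ ∏ i ∈ s, u i :=
      Nat.le_of_dvd (prod_pos hus) ((gcd_dvd hi₀).trans (dvd_prod_of_mem u hi₀))
    obtain ⟨α, β, hαβ, hα, hβ⟩ := Nat.exists_mul_add_mul_eq_gcd_abs_le hua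
      (Nat.pos_of_ne_zero fun h => (hus i₀ hi₀).ne' (gcd_eq_zero_iff.1 h i₀ hi₀))
    have hne : ∀ i ∈ s, i ≠ a := fun i hi h => ha (h ▸ hi)
    refine ⟨fun i => if i = a then α else β * y i, ?_, ?_⟩
    · dsimp only
      rw [sum_cons, if_pos rfl, sum_congr rfl fun i hi => by rw [if_neg (hne i hi), mul_assoc],
        ← mul_sum, hy, gcd_cons]
      exact hαβ
    · have hP : (0 : ℤ) ≤ ∏ i ∈ s, (u i : ℤ) := by positivity
      have hgP' : ((s.gcd u : ℕ) : ℤ) ≤ ∏ i ∈ s, (u i : ℤ) := by exact_mod_cast hgP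
      have hua' : (1 : ℤ) ≤ u a := by exact_mod_cast hua
      intro i hi
      dsimp only
      rw [prod_cons]
      rcases mem_cons.1 hi with rfl | hi
      · rw [if_pos rfl]
        nlinarith
      · rw [if_neg (hne i hi), abs_mul]
        exact mul_le_mul hβ (hyP i hi) (abs_nonneg _) (by positivity)

def IsRearrangingMatrix {ι : Type*} [Fintype ι] {p : ℕ} (N : ℕ) (u a : ι → ℕ)
    (C : Fin p → ι → ℕ) : Prop :=
  (∀ j, ∑ s, C s j = a j) ∧ ∀ s, ∑ j, C s j * u j = N

theorem IsRearrangingMatrix.cons {ι : Type*} [Fintype ι] {p N : ℕ} {u a c : ι → ℕ}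
    {C : Fin p → ι → ℕ} (hC : IsRearrangingMatrix N u (a - c) C) (hc : ∑ j, c j * u j = N)
    (hca : c ≤ a) : IsRearrangingMatrix N u a (Fin.cons c C) := by
  refine ⟨fun j => ?_, Fin.cases (by simpa using hc) (by simpa using hC.2)⟩
  rw [Fin.sum_univ_succ]
  simp only [Fin.cons_zero, Fin.cons_succ, hC.1 j, Pi.sub_apply]
  exact Nat.add_sub_cancel' (hca j)

theorem IsRearrangeable.gcd_dvd {m N : ℕ} {u a : Fin m → ℕ} (h : IsRearrangeable N u a) :
    univ.gcd u ∣ N := by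
  obtain ⟨p, hp, C, -, hrow⟩ := h
  rw [← hrow ⟨0, hp⟩]
  exact dvd_sum fun j _ => (Finset.gcd_dvd (mem_univ j)).mul_left _

section Construction

variable {ι : Type*} [Fintype ι] {u : ι → ℕ} {N : ℕ}

theorem exists_int_row_abs_sub_le [Nonempty ι] (hu : ∀ i, 0 < u i) (hN : univ.gcd u ∣ N)
    {q : ℤ} (hq : 0 < q) (a : ι → ℤ) (hsum : ∑ i, a i * u i = q * N) :
    ∃ c : ι → ℤ, ∑ i, c i * u i = N ∧
      ∀ i, |q * c i - a i| ≤ (q - 1) * ((∑ i, (u i : ℤ)) * ∏ i, (u i : ℤ) + 1) := by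
  obtain ⟨x, hx, hxP⟩ := exists_sum_mul_eq_gcd_abs_le_prod u univ_nonempty fun i _ => hu i
  set S := ∑ i, (u i : ℤ)
  set P := ∏ i, (u i : ℤ)
  set D := (N : ℤ) - ∑ i, a i / q * u i
  have hrem : ∀ i, 0 ≤ a i - q * (a i / q) ∧ a i - q * (a i / q) ≤ q - 1 := fun i => by
    have := Int.emod_add_mul_ediv (a i) q
    have := Int.emod_nonneg (a i) hq.ne'
    have := Int.emod_lt_of_pos (a i) hq
    constructor <;> linarith
  have hqD : q * D = ∑ i, (a i - q * (a i / q)) * u i := by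
    simp only [D, sub_mul, sum_sub_distrib, hsum, mul_sub, mul_sum]
    ring_nf
  have hD0 : 0 ≤ D := by
    have : 0 ≤ q * D := hqD ▸ sum_nonneg fun i _ => mul_nonneg (hrem i).1 (by positivity)
    exact nonneg_of_mul_nonneg_right (by linarith) hq
  have hDS : q * D ≤ (q - 1) * S := by
    rw [hqD, mul_sum]
    exact sum_le_sum fun i _ => mul_le_mul_of_nonneg_right (hrem i).2 (by positivity)
  obtain ⟨e, he⟩ : ((univ.gcd u : ℕ) : ℤ) ∣ D := by
    refine dvd_sub (by exact_mod_cast hN) (dvd_sum fun i _ => dvd_mul_of_dvd_right ?_ _)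
    exact_mod_cast gcd_dvd (mem_univ i)
  have hg : (1 : ℤ) ≤ univ.gcd u := by
    exact_mod_cast Nat.pos_of_ne_zero fun h =>
      (hu (Classical.arbitrary ι)).ne' (gcd_eq_zero_iff.1 h _ (mem_univ _))
  have he0 : 0 ≤ e := nonneg_of_mul_nonneg_right (he ▸ hD0) (by linarith)
  have heD : e ≤ D := by nlinarith
  refine ⟨fun i => a i / q + x i * e, ?_, fun i => ?_⟩
  · simp only [add_mul, sum_add_distrib, mul_right_comm _ e, ← sum_mul, hx]
    linarith
  · have hxe : |q * (x i * e)| ≤ (q - 1) * S * P := by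
      rw [abs_mul, abs_mul, abs_of_pos hq, abs_of_nonneg he0]
      calc q * (|x i| * e) ≤ q * (P * D) := by
            gcongr
            exact hxP i (mem_univ i)
        _ = P * (q * D) := by ring
        _ ≤ P * ((q - 1) * S) := by gcongr
        _ = (q - 1) * S * P := by ring
    rw [abs_le] at hxe ⊢
    constructor <;> nlinarith [hrem i]

theorem exists_row_add_lt [Nonempty ι] (hu : ∀ i, 0 < u i) (hN : univ.gcd u ∣ N)
    {p : ℕ} (hp : 1 ≤ p) (a : ι → ℕ) (hsum : ∑ i, a i * u i = (p + 1) * N)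
    (hbig : ∀ i, (p + 1) ^ 2 * (∑ j, u j) * (∏ j, u j) < a i) :
    ∃ c : ι → ℕ, ∑ i, c i * u i = N ∧ ∀ i, c i + p ^ 2 * (∑ j, u j) * (∏ j, u j) < a i := by
  obtain ⟨c, hc, hca⟩ := exists_int_row_abs_sub_le hu hN (q := p + 1) (by positivity)
    (fun i => a i) (by exact_mod_cast hsum)
  have hbound : ∀ i, 0 ≤ c i ∧ c i + p ^ 2 * (∑ j, (u j : ℤ)) * (∏ j, (u j : ℤ)) < a i := by
    intro i
    set T := (∑ j, (u j : ℤ)) * ∏ j, (u j : ℤ)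
    have hT : 1 ≤ T := by
      have hS : (1 : ℤ) ≤ ∑ j, (u j : ℤ) := by
        exact_mod_cast (hu i).trans_le (single_le_sum (fun j _ => (hu j).le) (mem_univ i))
      have hP : (1 : ℤ) ≤ ∏ j, (u j : ℤ) := by
        exact_mod_cast prod_pos fun j _ => hu j
      nlinarith
    have hp' : (1 : ℤ) ≤ p := by exact_mod_cast hp
    have hai : (p + 1) ^ 2 * T < a i := by
      rw [← mul_assoc]; exact_mod_cast hbig i
    have hci := abs_le.1 (hca i)
    simp only [add_sub_cancel_right] at hci
    constructor
    · by_contra! hneg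
      nlinarith
    · rw [mul_assoc]
      nlinarith
  refine ⟨fun i => (c i).toNat, ?_, fun i => ?_⟩
  · have hc' : ∀ i, ((c i).toNat : ℤ) = c i := fun i => Int.toNat_of_nonneg (hbound i).1
    exact_mod_cast (show ∑ i, ((c i).toNat : ℤ) * u i = N by simpa only [hc'] using hc)
  · zify
    rw [Int.toNat_of_nonneg (hbound i).1]
    exact (hbound i).2

theorem exists_isRearrangingMatrix [Nonempty ι] (hu : ∀ i, 0 < u i) (hN : univ.gcd u ∣ N)
    {p : ℕ} (hp : 1 ≤ p) (a : ι → ℕ) (hsum : ∑ i, a i * u i = p * N)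
    (hbig : ∀ i, p ^ 2 * (∑ j, u j) * (∏ j, u j) < a i) :
    ∃ C : Fin p → ι → ℕ, IsRearrangingMatrix N u a C := by
  induction p, hp using Nat.le_induction generalizing a with
  | base => exact ⟨fun _ => a, fun j => by simp, fun _ => by simpa using hsum⟩
  | succ p hp ih =>
    obtain ⟨c, hc, hca⟩ := exists_row_add_lt hu hN hp a hsum hbig
    have hle : c ≤ a := fun i => (Nat.le_add_right _ _).trans (hca i).le
    have hsum' : ∑ i, (a - c) i * u i = p * N := by
      have : ∑ i, (a - c) i * u i + ∑ i, c i * u i = ∑ i, a i * u i := by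
        rw [← sum_add_distrib]
        exact sum_congr rfl fun i _ => by rw [Pi.sub_apply, ← add_mul, Nat.sub_add_cancel (hle i)]
      rw [hc, hsum] at this
      linarith
    obtain ⟨C, hC⟩ := ih (a - c) hsum' fun i => by have := hca i; simp only [Pi.sub_apply]; omega
    exact ⟨Fin.cons c C, hC.cons hc hle⟩

end Construction

theorem stmt0_general {m N p : ℕ} (hm : 1 ≤ m) (hp : 1 ≤ p)
    (a u : Fin m → ℕ) (hu : ∀ i, 0 < u i)
    (hsum : ∑ i, a i * u i = p * N)
    (hbig : ∀ i, a i > p ^ 2 * (∑ j, u j) * (∏ j, u j)) :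
    (IsRearrangeable N u a ↔ Finset.univ.gcd u ∣ N) ∧
    (Finset.univ.gcd u ∣ N →
      ∃ C : Fin p → Fin m → ℕ,
        (∀ j, ∑ s, C s j = a j) ∧ (∀ s, ∑ j, C s j * u j = N)) := by
  have : Nonempty (Fin m) := ⟨⟨0, hm⟩⟩
  have hmatrix (hN : univ.gcd u ∣ N) : ∃ C : Fin p → Fin m → ℕ, IsRearrangingMatrix N u a C :=
    exists_isRearrangingMatrix hu hN hp a hsum hbig
  exact ⟨⟨IsRearrangeable.gcd_dvd, fun hN => ⟨p, hp, hmatrix hN⟩⟩, hmatrix⟩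

theorem stmt0 {m N p : ℕ} (hm : 1 ≤ m) (hN : 1 ≤ N) (hp : 1 ≤ p)
    (a u : Fin m → ℕ) (ha : ∀ i, 0 < a i) (hu : ∀ i, 0 < u i)
    (hsum : ∑ i, a i * u i = p * N)
    (hbig : ∀ i, a i > p ^ 2 * (∑ j, u j) * (∏ j, u j)) :
    (IsRearrangeable N u a ↔ Finset.univ.gcd u ∣ N) ∧
    (Finset.univ.gcd u ∣ N →
      ∃ C : Fin p → Fin m → ℕ,
        (∀ j, ∑ s, C s j = a j) ∧ (∀ s, ∑ j, C s j * u j = N)) :=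
  stmt0_general hm hp a u hu hsum hbig
end

section
/- Let A be an m×m primitive matrix with nonnegative integer entries, let N ≥ 1 be an integer, let u = (u₁,…,u_m) be a vector of positive integers with A·u = N·u, and set g = gcd(u₁,…,u_m). Then there exists an integer k ≥ 1 such that every row of A^k is (g·N^k, u)-rearrangeable; moreover, for each i, the rearranging matrix for the i-th row of A^k can be chosen with exactly uᵢ/g rows. -/
/-!
Write `u = g • v` with `gcd v = 1` and fix Bézout coefficients `∑ zⱼ vⱼ = 1`. Since `v` is an
eigenvector too, row `i` of `Aᵏ` is a vector `a` of `v`-weight `vᵢ Nᵏ`, to be cut into `p = vᵢ`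
rows of weight `S = Nᵏ`. Correct the row `⌊a / p⌋`, whose weight falls short of `S` by some
`0 ≤ d < ∑ vⱼ`, to `x = ⌊a / p⌋ + d z` of weight exactly `S`; then `p - 1` copies of `x` and the
remainder `a - (p - 1) x` do the job, provided every entry of `a` is at least
`p (p - 1) (∑ vⱼ) max |zⱼ|`. For `p ≥ 2` we have `m ≥ 2`, and primitivity makes the entries of
`Aᵏ` grow like `m^(k / n)`, so one `k` works for all rows at once.
-/

/-- `A` is primitive: some power of `A` has all entries positive. -/
def Matrix.IsPrimitiveNat {m : ℕ} (A : Matrix (Fin m) (Fin m) ℕ) : Prop :=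
  ∃ n : ℕ, 1 ≤ n ∧ ∀ i j, 0 < (A ^ n) i j

open Finset Matrix

theorem Finset.exists_sum_mul_eq_one_of_gcd_eq_one {ι : Type*} (s : Finset ι) {v : ι → ℕ}
    (h : s.gcd v = 1) : ∃ z : ι → ℤ, ∑ j ∈ s, z j * v j = 1 := by
  obtain ⟨z, hz⟩ := s.gcd_eq_sum_mul (fun j => (v j : ℤ))
  have hdvd : (s.gcd fun j => (v j : ℤ)).natAbs ∣ 1 :=
    h ▸ Finset.dvd_gcd fun j hj => Int.natAbs_dvd_natAbs.mpr (Finset.gcd_dvd hj)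
  have hone : s.gcd (fun j => (v j : ℤ)) = 1 := by
    rw [← Int.natAbs_of_nonneg Int.finsetGcd_nonneg, Nat.dvd_one.mp hdvd, Nat.cast_one]
  exact ⟨z, by simpa [hone, mul_comm] using hz.symm⟩

theorem Finset.one_lt_card_of_gcd_univ_eq_one {ι : Type*} [Fintype ι] {v : ι → ℕ}
    (hv : univ.gcd v = 1) {i : ι} (hi : 1 < v i) : 1 < Fintype.card ι := by
  by_contra h
  have hcard : Fintype.card ι = 1 := le_antisymm (not_lt.mp h) (Fintype.card_pos_iff.mpr ⟨i⟩)
  rw [univ_eq_singleton_of_card_one i hcard, gcd_singleton, normalize_eq] at hv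
  omega

theorem Matrix.card_pow_le_pow_succ_apply {n : Type*} [Fintype n] [DecidableEq n]
    {M : Matrix n n ℕ} (hM : ∀ i j, 0 < M i j) (t : ℕ) (i j : n) :
    Fintype.card n ^ t ≤ (M ^ (t + 1)) i j := by
  induction t generalizing j with
  | zero => rw [pow_zero, zero_add, pow_one]; exact hM i j
  | succ t ih =>
    calc Fintype.card n ^ (t + 1) = ∑ _l : n, Fintype.card n ^ t := by
          simp [pow_succ, mul_comm]
      _ ≤ ∑ l, (M ^ (t + 1)) i l * M l j :=
          sum_le_sum fun l _ => le_mul_of_le_of_one_le (ih l) (hM l j)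
      _ = (M ^ (t + 1 + 1)) i j := by rw [pow_succ M (t + 1), mul_apply]

theorem Matrix.le_pow_mul_succ_apply {n : Type*} [Fintype n] [DecidableEq n] {A : Matrix n n ℕ}
    {r : ℕ} (hA : ∀ i j, 0 < (A ^ r) i j) (hn : 1 < Fintype.card n) (t : ℕ) (i j : n) :
    t ≤ (A ^ (r * (t + 1))) i j :=
  calc t ≤ 2 ^ t := Nat.lt_two_pow_self.le
    _ ≤ Fintype.card n ^ t := Nat.pow_le_pow_left hn t
    _ ≤ (A ^ (r * (t + 1))) i j := pow_mul A r (t + 1) ▸ card_pow_le_pow_succ_apply hA t i j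

theorem Matrix.pow_mulVec_of_mulVec_eq_smul {n R : Type*} [Fintype n] [DecidableEq n]
    [CommSemiring R] {A : Matrix n n R} {u : n → R} {c : R} (h : A *ᵥ u = c • u) (k : ℕ) :
    (A ^ k) *ᵥ u = c ^ k • u := by
  induction k with
  | zero => simp
  | succ k ih => rw [pow_succ', ← mulVec_mulVec, ih, mulVec_smul, h, smul_smul, pow_succ]

section Rearrangement

variable {ι : Type*} [Fintype ι] {v : ι → ℕ}

theorem exists_rearrangement_of_copies {q S : ℕ} {a x : ι → ℕ}
    (ha : ∑ j, a j * v j = (q + 1) * S) (hx : ∑ j, x j * v j = S) (hxa : ∀ j, q * x j ≤ a j) :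
    ∃ C : Fin (q + 1) → ι → ℕ, (∀ j, ∑ s, C s j = a j) ∧ ∀ s, ∑ j, C s j * v j = S := by
  refine ⟨Fin.cons (fun j => a j - q * x j) fun _ => x, fun j => ?_, Fin.cases ?_ fun _ => hx⟩
  · simp [Fin.sum_univ_succ, Nat.sub_add_cancel (hxa j)]
  · have : ∑ j, (a j - q * x j) * v j + q * S = (q + 1) * S := by
      rw [← ha, ← hx, mul_sum, ← sum_add_distrib]
      refine sum_congr rfl fun j _ => ?_
      rw [← mul_assoc, ← add_mul, Nat.sub_add_cancel (hxa j)]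
    simp only [Fin.cons_zero]
    linarith

theorem exists_row_of_bezout {z : ι → ℤ} (hz : ∑ j, z j * v j = 1) {Z : ℕ}
    (hZ : ∀ j, |z j| ≤ Z) {q S : ℕ} {a : ι → ℕ} (ha : ∑ j, a j * v j = (q + 1) * S)
    (hbig : ∀ j, (q + 1) * q * ((∑ j, v j) * Z) ≤ a j) :
    ∃ x : ι → ℕ, ∑ j, x j * v j = S ∧ ∀ j, q * x j ≤ a j := by
  set V := ∑ j, v j
  set b : ι → ℕ := fun j => a j / (q + 1)
  set d : ℤ := S - ∑ j, (b j : ℤ) * v j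
  -- `(q + 1) d` is the `v`-weight of the remainders `aⱼ % (q + 1) ≤ q`.
  have hd : (q + 1) * d = ∑ j, ((a j % (q + 1) : ℕ) : ℤ) * v j := by
    have hS : ((q + 1) * S : ℤ) = ∑ j, (a j : ℤ) * v j := by exact_mod_cast ha.symm
    simp only [d, mul_sub, hS, mul_sum, ← sum_sub_distrib]
    refine sum_congr rfl fun j _ => ?_
    have hdiv : (a j : ℤ) = (a j % (q + 1) : ℕ) + (q + 1) * b j := by
      exact_mod_cast (Nat.mod_add_div (a j) (q + 1)).symm
    rw [hdiv]
    ring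
  have hd0 : 0 ≤ d := by
    have : 0 ≤ (q + 1 : ℤ) * d := hd ▸ sum_nonneg fun j _ => by positivity
    exact (mul_nonneg_iff_of_pos_left (by positivity)).mp this
  have hdV : (q + 1) * d ≤ q * V := by
    rw [hd]
    push_cast [V, mul_sum]
    refine sum_le_sum fun j _ => mul_le_mul_of_nonneg_right ?_ (by positivity)
    exact_mod_cast Nat.lt_succ_iff.mp (Nat.mod_lt (a j) q.succ_pos)
  have hdz : ∀ j, (q + 1) * |d * z j| ≤ q * (V * Z) := by
    intro j
    rw [abs_mul, abs_of_nonneg hd0, ← mul_assoc, ← mul_assoc]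
    exact mul_le_mul hdV (hZ j) (abs_nonneg _) (by positivity)
  have hb : ∀ j, (q * (V * Z) : ℤ) ≤ b j := by
    intro j
    exact_mod_cast (Nat.le_div_iff_mul_le q.succ_pos).mpr (by linarith [hbig j])
  have hx : ∀ j, 0 ≤ (b j : ℤ) + d * z j := by
    intro j
    nlinarith [neg_abs_le (d * z j), hdz j, hb j, mul_nonneg q.cast_nonneg (abs_nonneg (d * z j))]
  refine ⟨fun j => ((b j : ℤ) + d * z j).toNat, ?_, fun j => ?_⟩
  · have : ∑ j, ((b j : ℤ) + d * z j) * v j = S := by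
      simp only [add_mul, sum_add_distrib, mul_assoc, ← mul_sum, hz, d]
      ring
    zify
    simp [Int.toNat_of_nonneg (hx _), this]
  · have hbq : ((q + 1) * b j : ℤ) ≤ a j := by exact_mod_cast Nat.mul_div_le (a j) (q + 1)
    zify
    rw [Int.toNat_of_nonneg (hx j)]
    nlinarith [hdz j, hb j, mul_nonneg q.cast_nonneg (sub_nonneg.mpr (le_abs_self (d * z j))),
      mul_nonneg q.cast_nonneg (abs_nonneg (d * z j))]

theorem exists_rearrangement_of_bezout {z : ι → ℤ} (hz : ∑ j, z j * v j = 1) {Z : ℕ}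
    (hZ : ∀ j, |z j| ≤ Z) {p S : ℕ} (hp : 0 < p) {a : ι → ℕ} (ha : ∑ j, a j * v j = p * S)
    (hbig : ∀ j, p * (p - 1) * ((∑ j, v j) * Z) ≤ a j) :
    ∃ C : Fin p → ι → ℕ, (∀ j, ∑ s, C s j = a j) ∧ ∀ s, ∑ j, C s j * v j = S := by
  obtain ⟨q, rfl⟩ := Nat.exists_eq_add_one_of_ne_zero hp.ne'
  obtain ⟨x, hx, hxa⟩ := exists_row_of_bezout hz hZ ha (by simpa using hbig)
  exact exists_rearrangement_of_copies ha hx hxa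

end Rearrangement

theorem Matrix.exists_pow_rearrangement_of_gcd_eq_one {ι : Type*} [Fintype ι] [DecidableEq ι]
    {A : Matrix ι ι ℕ} {n : ℕ} (hn : 1 ≤ n) (hpos : ∀ i j, 0 < (A ^ n) i j) {N : ℕ}
    {v : ι → ℕ} (hv0 : ∀ i, 0 < v i) (hv : univ.gcd v = 1) (heig : A *ᵥ v = N • v) :
    ∃ k : ℕ, 1 ≤ k ∧ ∀ i, ∃ C : Fin (v i) → ι → ℕ,
      (∀ j, ∑ s, C s j = (A ^ k) i j) ∧ ∀ s, ∑ j, C s j * v j = N ^ k := by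
  obtain ⟨z, hz⟩ := univ.exists_sum_mul_eq_one_of_gcd_eq_one hv
  set Z := univ.sup fun j => (z j).natAbs
  have hZ : ∀ j, |z j| ≤ Z := fun j => by
    rw [Int.abs_eq_natAbs]; exact_mod_cast le_sup (f := fun j => (z j).natAbs) (mem_univ j)
  set P := univ.sup v
  set B := P * (P - 1) * ((∑ j, v j) * Z)
  refine ⟨n * (B + 1), Nat.mul_pos hn B.succ_pos, fun i => ?_⟩
  have hrow : ∑ j, (A ^ (n * (B + 1))) i j * v j = v i * N ^ (n * (B + 1)) := by
    have := congrFun (pow_mulVec_of_mulVec_eq_smul heig (n * (B + 1))) i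
    simpa [mulVec, dotProduct, mul_comm] using this
  refine exists_rearrangement_of_bezout hz hZ (hv0 i) hrow fun j => ?_
  rcases le_or_gt (v i) 1 with hi | hi
  · simp [Nat.sub_eq_zero_of_le hi]
  calc v i * (v i - 1) * ((∑ j, v j) * Z) ≤ B := by
        have hP : v i ≤ P := le_sup (mem_univ i)
        show _ ≤ P * (P - 1) * _
        gcongr
    _ ≤ (A ^ (n * (B + 1))) i j :=
        le_pow_mul_succ_apply hpos (one_lt_card_of_gcd_univ_eq_one hv hi) B i j

theorem stmt1_general {m : ℕ} (hm : 1 ≤ m) (A : Matrix (Fin m) (Fin m) ℕ)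
    (hA : A.IsPrimitiveNat)
    (N : ℕ)
    (u : Fin m → ℕ) (hu : ∀ i, 0 < u i)
    (heig : A.mulVec u = N • u) :
    ∃ k : ℕ, 1 ≤ k ∧ ∀ i : Fin m,
      ∃ C : Fin (u i / Finset.univ.gcd u) → Fin m → ℕ,
        (∀ j, ∑ s, C s j = (A ^ k) i j) ∧
        (∀ s, ∑ j, C s j * u j = Finset.univ.gcd u * N ^ k) := by
  obtain ⟨n, hn, hpos⟩ := hA
  obtain ⟨v, huv, hv⟩ := extract_gcd u (univ_nonempty_iff.mpr ⟨⟨0, hm⟩⟩)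
  set g := univ.gcd u
  replace huv : u = g • v := funext fun j => huv j (mem_univ j)
  have hg : g ≠ 0 := fun h => (hu ⟨0, hm⟩).ne' (by simp [huv, h])
  have hv0 : ∀ i, 0 < v i := fun i => Nat.pos_of_ne_zero fun h => (hu i).ne' (by simp [huv, h])
  have heigv : A *ᵥ v = N • v :=
    smul_right_injective _ hg <| show g • (A *ᵥ v) = g • (N • v) by
      rw [← mulVec_smul, ← huv, heig, huv, smul_comm]
  obtain ⟨k, hk, hC⟩ := exists_pow_rearrangement_of_gcd_eq_one hn hpos hv0 hv heigv
  refine ⟨k, hk, fun i => ?_⟩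
  rw [show u i / g = v i by
    rw [huv, Pi.smul_apply, smul_eq_mul, Nat.mul_div_cancel_left _ (Nat.pos_of_ne_zero hg)]]
  obtain ⟨C, hcol, hrow⟩ := hC i
  refine ⟨C, hcol, fun s => ?_⟩
  simp only [huv, Pi.smul_apply, smul_eq_mul, mul_left_comm _ g, ← mul_sum, hrow s]

theorem stmt1 {m : ℕ} (hm : 1 ≤ m) (A : Matrix (Fin m) (Fin m) ℕ)
    (hA : A.IsPrimitiveNat) (N : ℕ) (hN : 1 ≤ N)
    (u : Fin m → ℕ) (hu : ∀ i, 0 < u i)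
    (heig : A.mulVec u = N • u) :
    ∃ k : ℕ, 1 ≤ k ∧ ∀ i : Fin m,
      ∃ C : Fin (u i / Finset.univ.gcd u) → Fin m → ℕ,
        (∀ j, ∑ s, C s j = (A ^ k) i j) ∧
        (∀ s, ∑ j, C s j * u j = Finset.univ.gcd u * N ^ k) :=
  stmt1_general hm A hA N u hu heig
end

section
/- Let A be an m×m primitive matrix with nonnegative integer entries, let N ≥ 1 be an integer, and let u = (u₁,…,u_m) be a vector of positive integers with A·u = N·u. If gcd(u₁,…,u_m) divides N, then there exists an integer k ≥ 1 such that every row of A^k is (N^k, u)-rearrangeable. -/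
open Finset

theorem Finset.natCast_gcd {ι : Type*} (s : Finset ι) (f : ι → ℕ) :
    ((s.gcd f : ℕ) : ℤ) = s.gcd fun i => (f i : ℤ) := by
  classical
  induction s using Finset.induction with
  | empty => simp
  | insert a s ha ih =>
    rw [gcd_insert, gcd_insert, ← ih, ← Int.coe_gcd, Int.gcd_natCast_natCast]
    rfl

theorem Finset.exists_sum_natCast_mul_eq_gcd {ι : Type*} (s : Finset ι) (f : ι → ℕ) :
    ∃ x : ι → ℤ, ∑ i ∈ s, (f i : ℤ) * x i = s.gcd f := by
  obtain ⟨x, hx⟩ := s.gcd_eq_sum_mul fun i => (f i : ℤ)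
  exact ⟨x, by rw [natCast_gcd, hx]⟩

section Partition

variable {ι : Type*} [Fintype ι] {w : ι → ℕ}

theorem sum_div_mul_le {b : ι → ℕ} {t M : ℕ} (hb : ∑ j, b j * w j = t * M) (ht : 0 < t) :
    ∑ j, b j / t * w j ≤ M := by
  refine Nat.le_of_mul_le_mul_left ?_ ht
  rw [← hb, mul_sum]
  refine sum_le_sum fun j _ => ?_
  rw [← mul_assoc]
  exact Nat.mul_le_mul_right _ (Nat.mul_div_le _ _)

theorem le_sum_div_mul_add_sum {b : ι → ℕ} {t M : ℕ} (hb : ∑ j, b j * w j = t * M)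
    (ht : 0 < t) : M ≤ ∑ j, b j / t * w j + ∑ j, w j := by
  refine Nat.le_of_mul_le_mul_left ?_ ht
  calc t * M = ∑ j, b j * w j := hb.symm
    _ ≤ ∑ j, t * (b j / t + 1) * w j :=
      sum_le_sum fun j _ => Nat.mul_le_mul_right _ (Nat.lt_mul_div_succ _ ht).le
    _ = t * (∑ j, b j / t * w j + ∑ j, w j) := by
      rw [← sum_add_distrib, mul_sum]
      congr! 1 with j
      ring

theorem exists_sum_mul_eq_of_le {x : ι → ℤ} (hx : ∑ j, (w j : ℤ) * x j = univ.gcd w)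
    {M : ℕ} (hM : univ.gcd w ∣ M) {q : ι → ℕ} (hqM : ∑ j, q j * w j ≤ M)
    (hMq : M ≤ ∑ j, q j * w j + ∑ j, w j) (hq : ∀ j, (∑ i, w i) * (x j).natAbs ≤ q j) :
    ∃ c : ι → ℕ, ∑ j, c j * w j = M ∧ ∀ j, c j ≤ q j + (∑ i, w i) * (x j).natAbs := by
  set g := univ.gcd w
  set r := M - ∑ j, q j * w j
  have hgr : g ∣ r :=
    Nat.dvd_sub hM (dvd_sum fun j _ => (gcd_dvd (mem_univ j)).mul_left _)
  set e := r / g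
  have hex : ∀ j, |(e : ℤ) * x j| ≤ (((∑ i, w i) * (x j).natAbs : ℕ) : ℤ) := fun j => by
    rw [Int.abs_eq_natAbs, Int.natAbs_mul, Int.natAbs_natCast, Nat.cast_le]
    exact Nat.mul_le_mul_right _ ((Nat.div_le_self r g).trans (by omega))
  have hc : ∀ j, (((q j + e * x j).toNat : ℕ) : ℤ) = q j + e * x j := fun j =>
    Int.toNat_of_nonneg (by linarith [neg_abs_le ((e : ℤ) * x j), hex j,
      (Nat.cast_le (α := ℤ)).mpr (hq j)])
  refine ⟨fun j => (q j + e * x j).toNat, ?_, fun j => ?_⟩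
  · have hge : (e : ℤ) * g = r := by exact_mod_cast Nat.div_mul_cancel hgr
    have hrM : (r : ℤ) = M - ∑ j, (q j : ℤ) * w j := by
      rw [Nat.cast_sub hqM]; push_cast; rfl
    zify
    simp only [hc, add_mul, sum_add_distrib]
    calc ∑ j, (q j : ℤ) * w j + ∑ j, e * x j * (w j : ℤ)
        = ∑ j, (q j : ℤ) * w j + e * ∑ j, (w j : ℤ) * x j := by
          rw [mul_sum]; congr! 2 with j; ring
      _ = M := by rw [hx, hge, hrM]; ring
  · rw [← Int.toNat_natCast (q j + _), Nat.cast_add]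
    exact Int.toNat_le_toNat (by linarith [le_abs_self ((e : ℤ) * x j), hex j])

theorem exists_row_of_sum_mul_eq_succ_mul {x : ι → ℤ}
    (hx : ∑ j, (w j : ℤ) * x j = univ.gcd w) {K : ℕ}
    (hK : ∀ j, (∑ i, w i) * (x j).natAbs < K) {t M : ℕ} (ht : 1 ≤ t) (hM : univ.gcd w ∣ M)
    {b : ι → ℕ} (hb : ∑ j, b j * w j = (t + 1) * M) (hbK : ∀ j, K * ((t + 1) * t) ≤ b j) :
    ∃ c : ι → ℕ, ∑ j, c j * w j = M ∧ ∀ j, c j + K * (t * (t - 1)) ≤ b j := by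
  have hqb : ∀ j, (t + 1) * (b j / (t + 1)) ≤ b j := fun j => Nat.mul_div_le _ _
  have hqK : ∀ j, K * t ≤ b j / (t + 1) := fun j =>
    (Nat.le_div_iff_mul_le (Nat.succ_pos t)).2 (by linarith [hbK j])
  obtain ⟨c, hcM, hcq⟩ := exists_sum_mul_eq_of_le hx hM (sum_div_mul_le hb t.succ_pos)
    (le_sum_div_mul_add_sum hb t.succ_pos) fun j => (hK j).le.trans (by nlinarith [hqK j])
  refine ⟨c, hcM, fun j => ?_⟩
  obtain ⟨s, rfl⟩ : ∃ s, t = s + 1 := ⟨t - 1, by omega⟩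
  have := hcq j; have := hK j; have := hqK j; have := hqb j
  simp only [Nat.add_sub_cancel]
  nlinarith

theorem exists_rows_of_sum_mul_eq {x : ι → ℤ} (hx : ∑ j, (w j : ℤ) * x j = univ.gcd w)
    {K : ℕ} (hK : ∀ j, (∑ i, w i) * (x j).natAbs < K) {M : ℕ} (hM : univ.gcd w ∣ M)
    {t : ℕ} (ht : 1 ≤ t) (b : ι → ℕ) (hb : ∑ j, b j * w j = t * M)
    (hbK : ∀ j, K * (t * (t - 1)) ≤ b j) :
    ∃ D : Fin t → ι → ℕ, (∀ j, ∑ s, D s j = b j) ∧ ∀ s, ∑ j, D s j * w j = M := by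
  induction t, ht using Nat.le_induction generalizing b with
  | base => exact ⟨fun _ => b, by simp, by simpa using hb⟩
  | succ t ht ih =>
    obtain ⟨c, hcM, hcb⟩ := exists_row_of_sum_mul_eq_succ_mul hx hK ht hM hb hbK
    have hsub : ∑ j, (b j - c j) * w j = t * M := by
      have hsplit : ∑ j, b j * w j = ∑ j, (b j - c j) * w j + ∑ j, c j * w j := by
        rw [← sum_add_distrib]
        refine sum_congr rfl fun j _ => ?_
        rw [← add_mul, Nat.sub_add_cancel (by have := hcb j; omega)]
      rw [hb, hcM] at hsplit
      linarith
    obtain ⟨D, hDcol, hDrow⟩ := ih (fun j => b j - c j) hsub fun j => by have := hcb j; omega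
    refine ⟨Fin.cons c D, fun j => ?_, Fin.cases hcM hDrow⟩
    rw [Fin.sum_univ_succ]
    simp only [Fin.cons_zero, Fin.cons_succ, hDcol]
    have := hcb j; omega

end Partition

theorem exists_forall_isRearrangeable {m : ℕ} (w : Fin m → ℕ) :
    ∃ K : ℕ, ∀ t M : ℕ, ∀ b : Fin m → ℕ, 1 ≤ t → univ.gcd w ∣ M →
      ∑ j, b j * w j = t * M → (∀ j, K * (t * (t - 1)) ≤ b j) → IsRearrangeable M w b := by
  obtain ⟨x, hx⟩ := univ.exists_sum_natCast_mul_eq_gcd w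
  refine ⟨∑ j, (∑ i, w i) * (x j).natAbs + 1, fun t M b ht hM hb hbK => ?_⟩
  have hK : ∀ j, (∑ i, w i) * (x j).natAbs < ∑ j, (∑ i, w i) * (x j).natAbs + 1 :=
    fun j => Nat.lt_succ_of_le <|
      single_le_sum (f := fun j => (∑ i, w i) * (x j).natAbs) (by simp) (mem_univ j)
  obtain ⟨D, hcol, hrow⟩ := exists_rows_of_sum_mul_eq hx hK hM ht b hb hbK
  exact ⟨t, ht, D, hcol, hrow⟩

namespace Matrix

variable {n : Type*} [Fintype n] [DecidableEq n] {A : Matrix n n ℕ} {N : ℕ} {u : n → ℕ}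

theorem pow_mulVec_of_mulVec_eq_smul_s3 (h : A *ᵥ u = N • u) (k : ℕ) :
    (A ^ k) *ᵥ u = N ^ k • u := by
  induction k with
  | zero => simp
  | succ k ih => rw [pow_succ, ← mulVec_mulVec, h, mulVec_smul, ih, smul_smul, ← pow_succ']

theorem sum_pow_apply_mul_of_mulVec_eq_smul (h : A *ᵥ u = N • u) (k : ℕ) (i : n) :
    ∑ j, (A ^ k) i j * u j = N ^ k * u i := by
  simpa [mulVec, dotProduct] using congrFun (pow_mulVec_of_mulVec_eq_smul_s3 h k) i

theorem pow_le_sum_mul_pow_add_apply {p : ℕ} (hp : ∀ i j, 1 ≤ (A ^ p) i j)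
    (h : A *ᵥ u = N • u) (hu : ∀ i, 0 < u i) (k : ℕ) (i j : n) :
    N ^ k ≤ (∑ l, u l) * (A ^ (k + p)) i j :=
  calc N ^ k ≤ N ^ k * u i := Nat.le_mul_of_pos_right _ (hu i)
    _ = ∑ l, (A ^ k) i l * u l := (sum_pow_apply_mul_of_mulVec_eq_smul h k i).symm
    _ ≤ ∑ l, (A ^ k) i l * ∑ l, u l :=
      sum_le_sum fun l _ => Nat.mul_le_mul_left _ (single_le_sum (by simp) (mem_univ l))
    _ = (∑ l, u l) * ∑ l, (A ^ k) i l * 1 := by rw [← sum_mul, mul_comm]; simp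
    _ ≤ (∑ l, u l) * ∑ l, (A ^ k) i l * (A ^ p) l j :=
      Nat.mul_le_mul_left _ (sum_le_sum fun l _ => Nat.mul_le_mul_left _ (hp l j))
    _ = (∑ l, u l) * (A ^ (k + p)) i j := by rw [pow_add, mul_apply]

theorem univ_eq_singleton_of_mulVec_eq_self (hA : ∀ i j, 1 ≤ A i j) (h : A *ᵥ u = u)
    (hu : ∀ i, 0 < u i) (i : n) : (univ : Finset n) = {i} := by
  have hsum : ∑ j, u j ≤ u i :=
    calc ∑ j, u j ≤ ∑ j, A i j * u j :=
          sum_le_sum fun j _ => Nat.le_mul_of_pos_left _ (hA i j)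
      _ = u i := by simpa [mulVec, dotProduct] using congrFun h i
  refine eq_singleton_iff_unique_mem.2 ⟨mem_univ i, fun j _ => ?_⟩
  by_contra hji
  have := sum_le_sum_of_subset (f := u) (subset_univ {j, i})
  rw [sum_pair hji] at this
  linarith [hu j]

theorem IsPrimitiveNat.exists_pow_apply_ge {m : ℕ} {A : Matrix (Fin m) (Fin m) ℕ}
    (hA : A.IsPrimitiveNat) {N : ℕ} (hN : 1 ≤ N) {u : Fin m → ℕ} (hu : ∀ i, 0 < u i)
    (h : A *ᵥ u = N • u) (hgcd : univ.gcd u ∣ N) (K : ℕ) :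
    ∃ k, 1 ≤ k ∧ ∀ i j, K * (u i * (u i - 1)) ≤ (A ^ k) i j := by
  obtain ⟨p, hp, hpos⟩ := hA
  rcases hN.eq_or_lt with rfl | hN2
  · refine ⟨1, le_rfl, fun i j => ?_⟩
    have hPu : (A ^ p) *ᵥ u = u := by simpa using pow_mulVec_of_mulVec_eq_smul_s3 h p
    have hui : u i ∣ 1 := by
      simpa [univ_eq_singleton_of_mulVec_eq_self hpos hPu hu i] using hgcd
    simp [Nat.dvd_one.1 hui]
  · set U := ∑ l, u l
    set B := K * (U * U)
    refine ⟨U * B + p, by omega, fun i j => ?_⟩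
    have hui : u i ≤ U := single_le_sum (fun _ _ => Nat.zero_le _) (mem_univ i)
    have hB : U * B < U * (A ^ (U * B + p)) i j :=
      (Nat.lt_pow_self hN2).trans_le (pow_le_sum_mul_pow_add_apply hpos h hu _ i j)
    calc K * (u i * (u i - 1)) ≤ B :=
          Nat.mul_le_mul_left _ (Nat.mul_le_mul hui (by omega))
      _ ≤ (A ^ (U * B + p)) i j := (Nat.lt_of_mul_lt_mul_left hB).le

end Matrix

theorem stmt3_general {m : ℕ} (A : Matrix (Fin m) (Fin m) ℕ)
    (hA : A.IsPrimitiveNat) (N : ℕ) (hN : 1 ≤ N)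
    (u : Fin m → ℕ) (hu : ∀ i, 0 < u i)
    (heig : A.mulVec u = N • u)
    (hgcd : Finset.univ.gcd u ∣ N) :
    ∃ k : ℕ, 1 ≤ k ∧ ∀ i : Fin m, IsRearrangeable (N ^ k) u ((A ^ k) i) := by
  obtain ⟨K, hK⟩ := exists_forall_isRearrangeable u
  obtain ⟨k, hk, hbig⟩ := hA.exists_pow_apply_ge hN hu heig hgcd K
  refine ⟨k, hk, fun i => hK (u i) (N ^ k) ((A ^ k) i) (hu i) ?_ ?_ (hbig i)⟩
  · exact hgcd.trans (dvd_pow_self N (by omega))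
  · rw [Matrix.sum_pow_apply_mul_of_mulVec_eq_smul heig, mul_comm]

theorem stmt3 {m : ℕ} (hm : 1 ≤ m) (A : Matrix (Fin m) (Fin m) ℕ)
    (hA : A.IsPrimitiveNat) (N : ℕ) (hN : 1 ≤ N)
    (u : Fin m → ℕ) (hu : ∀ i, 0 < u i)
    (heig : A.mulVec u = N • u)
    (hgcd : Finset.univ.gcd u ∣ N) :
    ∃ k : ℕ, 1 ≤ k ∧ ∀ i : Fin m, IsRearrangeable (N ^ k) u ((A ^ k) i) :=
  stmt3_general A hA N hN u hu heig hgcd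
end

section
/- Let C ⊆ ℝ denote the ternary Cantor set. Then C ∪ (C + 1) is Lipschitz equivalent to C. -/
/-- Two subsets `X`, `Y` of (possibly different) metric spaces are Lipschitz
equivalent if there are a bijection `f : X → Y` and a constant `L ≥ 1` with
`L⁻¹ * dist x y ≤ dist (f x) (f y) ≤ L * dist x y` for all `x y ∈ X`. -/
def LipschitzEquivalent {E F : Type*} [MetricSpace E] [MetricSpace F]
    (X : Set E) (Y : Set F) : Prop :=
  ∃ (f : X → Y) (L : ℝ), 1 ≤ L ∧ Function.Bijective f ∧
    ∀ x y : X, L⁻¹ * dist (x : E) (y : E) ≤ dist (f x : F) (f y : F) ∧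
      dist (f x : F) (f y : F) ≤ L * dist (x : E) (y : E)

/-!
Translating by `-1` and using the symmetry `1 - C = C`, the set `C ∪ (C + 1)` becomes `C ∪ -C`.
Away from `0`, both sets split into blocks at the scales `s = 3⁻ⁿ`: `C ∪ -C` has the two blocks
`±s · (C ∩ [2/3, 1])`, while `C` has the single block `s · (C ∩ [2/3, 1])`, which is the union of
the two copies `s · (2/3 + C/9)` and `s · (8/9 + C/9)` of `s · C/9`. Sending the two blocks of
`C ∪ -C` onto these two copies by similarities of ratio `1/3` gives a bijection `cantorFold`.
Distances within a block are divided by `3`, and any other two points are at distance comparable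
to the larger of their scales, both before and after the map.
-/

open Set

noncomputable def ternaryScale (x : ℝ) : ℝ := (3 : ℝ) ^ Int.clog 3 |x|

section ternaryScale

variable {x : ℝ}

@[simp]
lemma ternaryScale_abs (x : ℝ) : ternaryScale |x| = ternaryScale x := by
  simp [ternaryScale]

@[simp]
lemma ternaryScale_neg (x : ℝ) : ternaryScale (-x) = ternaryScale x := by
  simp [ternaryScale]

lemma ternaryScale_pos (x : ℝ) : 0 < ternaryScale x := zpow_pos (by norm_num) _

lemma abs_le_ternaryScale (x : ℝ) : |x| ≤ ternaryScale x := by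
  have := Int.self_le_zpow_clog (R := ℝ) (b := 3) (by norm_num) |x|
  rwa [Nat.cast_ofNat] at this

lemma ternaryScale_eq {k : ℤ} (hlt : 3 ^ k / 3 < |x|) (hle : |x| ≤ 3 ^ k) :
    ternaryScale x = 3 ^ k := by
  have hx : 0 < |x| := lt_trans (by positivity) hlt
  have h3 : ((3 : ℕ) : ℝ) = 3 := by norm_num
  have hk : Int.clog 3 |x| ≤ k := (Int.le_zpow_iff_clog_le (by norm_num) hx).1 (by rwa [h3])
  have hk' : k - 1 < Int.clog 3 |x| := (Int.zpow_lt_iff_lt_clog (by norm_num) hx).1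
    (by rwa [h3, zpow_sub_one₀ three_ne_zero, ← div_eq_mul_inv])
  rw [ternaryScale, show Int.clog 3 |x| = k by omega]

lemma ternaryScale_inv_pow_mul (n : ℕ) {t : ℝ} (h1 : 1 / 3 < t) (h2 : t ≤ 1) :
    ternaryScale ((3 ^ n)⁻¹ * t) = (3 ^ n)⁻¹ := by
  rw [← zpow_natCast, ← zpow_neg]
  apply ternaryScale_eq <;> rw [zpow_neg, zpow_natCast, abs_of_pos (by positivity)]
  · field_simp; linarith
  · exact mul_le_of_le_one_right (by positivity) h2

end ternaryScale

section CantorSet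

variable {x : ℝ}

lemma mem_cantorSet_cases (hx : x ∈ cantorSet) :
    (x ≤ 1 / 3 ∧ 3 * x ∈ cantorSet) ∨ (2 / 3 ≤ x ∧ 3 * x - 2 ∈ cantorSet) := by
  rw [cantorSet_eq_union_halves] at hx
  rcases hx with ⟨y, hy, rfl⟩ | ⟨y, hy, rfl⟩ <;> have := cantorSet_subset_unitInterval hy
  · exact Or.inl ⟨by linarith [this.2], by rwa [mul_div_cancel₀ _ three_ne_zero]⟩
  · exact Or.inr ⟨by linarith [this.1], by convert hy using 1; ring⟩

lemma div_three_mem_cantorSet (hx : x ∈ cantorSet) : x / 3 ∈ cantorSet := by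
  rw [cantorSet_eq_union_halves]; exact Or.inl ⟨x, hx, rfl⟩

lemma two_add_div_three_mem_cantorSet (hx : x ∈ cantorSet) : (2 + x) / 3 ∈ cantorSet := by
  rw [cantorSet_eq_union_halves]; exact Or.inr ⟨x, hx, rfl⟩

lemma one_sub_mem_preCantorSet {n : ℕ} (hx : x ∈ preCantorSet n) : 1 - x ∈ preCantorSet n := by
  induction n generalizing x with
  | zero => exact ⟨by linarith [hx.2], by linarith [hx.1]⟩
  | succ n ih =>
    rcases hx with ⟨y, hy, rfl⟩ | ⟨y, hy, rfl⟩
    · exact Or.inr ⟨1 - y, ih hy, by ring⟩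
    · exact Or.inl ⟨1 - y, ih hy, by ring⟩

lemma one_sub_mem_cantorSet (hx : x ∈ cantorSet) : 1 - x ∈ cantorSet :=
  mem_iInter.2 fun n => one_sub_mem_preCantorSet (mem_iInter.1 hx n)

lemma inv_pow_mul_mem_cantorSet (n : ℕ) (hx : x ∈ cantorSet) : (3 ^ n)⁻¹ * x ∈ cantorSet := by
  induction n with
  | zero => simpa using hx
  | succ n ih => convert div_three_mem_cantorSet ih using 1; rw [pow_succ]; field_simp

lemma pow_mul_mem_cantorSet (n : ℕ) (hx : x ∈ cantorSet) (h : 3 ^ n * x ≤ 1) :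
    3 ^ n * x ∈ cantorSet := by
  induction n generalizing x with
  | zero => simpa using hx
  | succ n ih =>
    have hx0 := (cantorSet_subset_unitInterval hx).1
    have h3x : 3 * x ≤ 1 := by
      nlinarith [one_le_pow₀ (M₀ := ℝ) (a := 3) (n := n) (by norm_num), pow_succ (3 : ℝ) n]
    rcases mem_cantorSet_cases hx with ⟨-, h3⟩ | ⟨hge, -⟩
    · rw [pow_succ, mul_assoc]; exact ih h3 (by rwa [← mul_assoc, ← pow_succ])
    · linarith

lemma exists_ternaryScale_eq_inv_pow (hx : x ∈ cantorSet) (hx0 : x ≠ 0) :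
    ∃ n : ℕ, ternaryScale x = (3 ^ n)⁻¹ ∧ 2 / 3 ≤ 3 ^ n * x ∧ 3 ^ n * x ∈ cantorSet := by
  have hpos : 0 < x := lt_of_le_of_ne (cantorSet_subset_unitInterval hx).1 (Ne.symm hx0)
  obtain ⟨n, hle, hlt⟩ := exists_nat_pow_near
    (one_le_inv_iff₀.2 ⟨hpos, (cantorSet_subset_unitInterval hx).2⟩) (by norm_num : (1 : ℝ) < 3)
  rw [← one_div, le_div_iff₀ hpos] at hle
  rw [← one_div, div_lt_iff₀ hpos, pow_succ] at hlt
  have hmem := pow_mul_mem_cantorSet n hx hle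
  refine ⟨n, ?_, ?_, hmem⟩
  · rw [← ternaryScale_inv_pow_mul n (by linarith) hle, inv_mul_cancel_left₀ (by positivity)]
  · rcases mem_cantorSet_cases hmem with ⟨h, -⟩ | ⟨h, -⟩ <;> linarith

end CantorSet

open scoped Pointwise

noncomputable def cantorFold (x : ℝ) : ℝ :=
  if 0 < x then x / 3 + 2 / 3 * ternaryScale x
  else if x < 0 then x / 3 + ternaryScale x
  else 0

section cantorFold

variable {x : ℝ}

lemma cantorFold_of_pos (hx : 0 < x) : cantorFold x = x / 3 + 2 / 3 * ternaryScale x := by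
  simp [cantorFold, hx]

lemma cantorFold_of_neg (hx : x < 0) : cantorFold x = x / 3 + ternaryScale x := by
  simp [cantorFold, hx, hx.not_gt]

@[simp]
lemma cantorFold_zero : cantorFold 0 = 0 := by simp [cantorFold]

lemma abs_mem_cantorSet (hx : x ∈ cantorSet ∪ -cantorSet) : |x| ∈ cantorSet := by
  rcases hx with hx | hx
  · rwa [abs_of_nonneg (cantorSet_subset_unitInterval hx).1]
  · rw [mem_neg] at hx
    rwa [abs_of_nonpos (by linarith [(cantorSet_subset_unitInterval hx).1])]

lemma two_thirds_mul_ternaryScale_le_abs (hx : x ∈ cantorSet ∪ -cantorSet) (hx0 : x ≠ 0) :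
    2 / 3 * ternaryScale x ≤ |x| := by
  obtain ⟨n, hs, h23, -⟩ :=
    exists_ternaryScale_eq_inv_pow (abs_mem_cantorSet hx) (abs_ne_zero.2 hx0)
  rw [ternaryScale_abs] at hs
  rw [hs, ← div_eq_mul_inv, div_le_iff₀ (by positivity)]
  linarith

lemma cantorFold_mem_Icc (hx : x ∈ cantorSet ∪ -cantorSet) (hx0 : x ≠ 0) :
    cantorFold x ∈ Icc (2 / 3 * ternaryScale x) (ternaryScale x) := by
  have h1 := two_thirds_mul_ternaryScale_le_abs hx hx0
  have h2 := abs_le_ternaryScale x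
  rcases lt_or_gt_of_ne hx0 with hneg | hpos
  · rw [abs_of_neg hneg] at h1 h2
    rw [cantorFold_of_neg hneg]
    constructor <;> linarith
  · rw [abs_of_pos hpos] at h1 h2
    rw [cantorFold_of_pos hpos]
    constructor <;> linarith

lemma abs_cantorFold_le (hx : x ∈ cantorSet ∪ -cantorSet) : |cantorFold x| ≤ 3 / 2 * |x| := by
  rcases eq_or_ne x 0 with rfl | hx0
  · simp
  have h1 := two_thirds_mul_ternaryScale_le_abs hx hx0
  obtain ⟨h2, h3⟩ := cantorFold_mem_Icc hx hx0
  rw [abs_of_nonneg (by linarith [ternaryScale_pos x])]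
  linarith

lemma cantorFold_mem (hx : x ∈ cantorSet ∪ -cantorSet) : cantorFold x ∈ cantorSet := by
  rcases eq_or_ne x 0 with rfl | hx0
  · simpa using zero_mem_cantorSet
  obtain ⟨n, hs, -, hmem⟩ :=
    exists_ternaryScale_eq_inv_pow (abs_mem_cantorSet hx) (abs_ne_zero.2 hx0)
  rw [ternaryScale_abs] at hs
  rcases lt_or_gt_of_ne hx0 with hneg | hpos
  · rw [abs_of_neg hneg] at hmem
    convert inv_pow_mul_mem_cantorSet n
      (two_add_div_three_mem_cantorSet (one_sub_mem_cantorSet hmem)) using 1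
    rw [cantorFold_of_neg hneg, hs]
    field_simp
    ring
  · rw [abs_of_pos hpos] at hmem
    convert inv_pow_mul_mem_cantorSet n (two_add_div_three_mem_cantorSet hmem) using 1
    rw [cantorFold_of_pos hpos, hs]
    field_simp
    ring

lemma surjOn_cantorFold : SurjOn cantorFold (cantorSet ∪ -cantorSet) cantorSet := by
  intro c hc
  rcases eq_or_ne c 0 with rfl | hc0
  · exact ⟨0, Or.inl zero_mem_cantorSet, cantorFold_zero⟩
  obtain ⟨n, hs, h23, hmem⟩ := exists_ternaryScale_eq_inv_pow hc hc0
  obtain ⟨-, hd⟩ : 2 / 3 ≤ 3 ^ n * c ∧ 3 * (3 ^ n * c) - 2 ∈ cantorSet := by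
    rcases mem_cantorSet_cases hmem with ⟨h, -⟩ | h
    · linarith
    · exact h
  set d := 3 * (3 ^ n * c) - 2 with hd_def
  have hd01 := cantorSet_subset_unitInterval hd
  have hc_eq : c = (3 ^ n)⁻¹ * ((2 + d) / 3) := by
    rw [hd_def]; field_simp; ring
  rcases mem_cantorSet_cases hd with ⟨hd1, -⟩ | ⟨hd2, -⟩
  · refine ⟨-((3 ^ n)⁻¹ * (1 - d)), Or.inr ?_, ?_⟩
    · simpa using inv_pow_mul_mem_cantorSet n (one_sub_mem_cantorSet hd)
    · have hneg : -((3 ^ n)⁻¹ * (1 - d)) < 0 := by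
        have : 0 < 1 - d := by linarith
        simp only [neg_lt_zero]; positivity
      rw [cantorFold_of_neg hneg, ternaryScale_neg, ternaryScale_inv_pow_mul n (by linarith)
        (by linarith), hc_eq]
      ring
  · refine ⟨(3 ^ n)⁻¹ * d, Or.inl (inv_pow_mul_mem_cantorSet n hd), ?_⟩
    rw [cantorFold_of_pos (by positivity), ternaryScale_inv_pow_mul n (by linarith) hd01.2, hc_eq]
    ring

end cantorFold

section cantorFold_bilipschitz

variable {x y : ℝ}

lemma cantorFold_bilipschitz_of_ternaryScale_eq (hx : x ∈ cantorSet ∪ -cantorSet)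
    (hy : y ∈ cantorSet ∪ -cantorSet) (hx0 : x ≠ 0) (hy0 : y ≠ 0)
    (hs : ternaryScale x = ternaryScale y) :
    |x - y| ≤ 18 * |cantorFold x - cantorFold y| ∧
      |cantorFold x - cantorFold y| ≤ 18 * |x - y| := by
  wlog hyx : y ≤ x generalizing x y
  · rw [abs_sub_comm x, abs_sub_comm (cantorFold x)]
    exact this hy hx hy0 hx0 hs.symm (le_of_not_ge hyx)
  have hx1 := two_thirds_mul_ternaryScale_le_abs hx hx0
  have hy1 := two_thirds_mul_ternaryScale_le_abs hy hy0
  have hx2 := abs_le_ternaryScale x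
  have hy2 := abs_le_ternaryScale y
  rw [← hs] at hy1 hy2
  have hxy := abs_nonneg (x - y)
  rcases lt_or_gt_of_ne hy0 with hy_neg | hy_pos
  · rcases lt_or_gt_of_ne hx0 with hx_neg | hx_pos
    · have h : cantorFold x - cantorFold y = (x - y) / 3 := by
        rw [cantorFold_of_neg hx_neg, cantorFold_of_neg hy_neg, ← hs]; ring
      rw [h, abs_div, abs_of_pos (three_pos : (0 : ℝ) < 3)]
      constructor <;> linarith
    · -- opposite sides of one block: `cantorFold y ≤ 7/9 · s < 8/9 · s ≤ cantorFold x`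
      rw [abs_of_neg hy_neg] at hy1 hy2
      rw [abs_of_pos hx_pos] at hx1 hx2
      rw [cantorFold_of_pos hx_pos, cantorFold_of_neg hy_neg, ← hs,
        abs_of_pos (by linarith : 0 < x - y), abs_of_pos (by linarith)]
      constructor <;> linarith
  · have h : cantorFold x - cantorFold y = (x - y) / 3 := by
      rw [cantorFold_of_pos (hy_pos.trans_le hyx), cantorFold_of_pos hy_pos, ← hs]; ring
    rw [h, abs_div, abs_of_pos (three_pos : (0 : ℝ) < 3)]
    constructor <;> linarith

lemma cantorFold_bilipschitz (hx : x ∈ cantorSet ∪ -cantorSet) (hy : y ∈ cantorSet ∪ -cantorSet) :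
    |x - y| ≤ 18 * |cantorFold x - cantorFold y| ∧
      |cantorFold x - cantorFold y| ≤ 18 * |x - y| := by
  wlog hyx : |y| ≤ |x| generalizing x y
  · rw [abs_sub_comm x, abs_sub_comm (cantorFold x)]
    exact this hy hx (le_of_not_ge hyx)
  rcases eq_or_ne x 0 with rfl | hx0
  · obtain rfl : y = 0 := abs_nonpos_iff.1 (by simpa using hyx)
    simp
  have hx1 := two_thirds_mul_ternaryScale_le_abs hx hx0
  have hx2 := abs_le_ternaryScale x
  by_cases hys : |y| ≤ ternaryScale x / 3
  · obtain ⟨hfx1, hfx2⟩ := cantorFold_mem_Icc hx hx0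
    have hfx : |cantorFold x| = cantorFold x := abs_of_nonneg (by linarith [ternaryScale_pos x])
    have hfy := abs_cantorFold_le hy
    have := abs_sub_abs_le_abs_sub x y
    have := abs_sub_abs_le_abs_sub (cantorFold x) (cantorFold y)
    have := abs_sub x y
    have := abs_sub (cantorFold x) (cantorFold y)
    constructor <;> linarith
  · have hy0 : y ≠ 0 := by rintro rfl; simp at hys; linarith [ternaryScale_pos x]
    exact cantorFold_bilipschitz_of_ternaryScale_eq hx hy hx0 hy0
      (ternaryScale_eq (not_le.1 hys) (hyx.trans hx2)).symm

end cantorFold_bilipschitz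

lemma lipschitzEquivalent_of_bilipschitzOn {E F : Type*} [MetricSpace E] [MetricSpace F]
    {X : Set E} {Y : Set F} {f : E → F} {L : ℝ} (hL : 1 ≤ L) (hmaps : MapsTo f X Y)
    (hsurj : SurjOn f X Y)
    (hf : ∀ x ∈ X, ∀ y ∈ X, dist x y ≤ L * dist (f x) (f y) ∧ dist (f x) (f y) ≤ L * dist x y) :
    LipschitzEquivalent X Y := by
  have hinj : InjOn f X := fun x hx y hy h =>
    dist_le_zero.1 (by simpa [h] using (hf x hx y hy).1)
  refine ⟨hmaps.restrict f X Y, L, hL, BijOn.bijective ⟨hmaps, hinj, hsurj⟩, fun x y =>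
    ⟨?_, (hf x x.2 y y.2).2⟩⟩
  rw [inv_mul_le_iff₀ (by linarith)]
  exact (hf x x.2 y y.2).1

lemma mem_union_image_add_one_iff {x : ℝ} :
    x ∈ cantorSet ∪ (fun x => x + 1) '' cantorSet ↔ x - 1 ∈ cantorSet ∪ -cantorSet := by
  have hC : x ∈ cantorSet ↔ 1 - x ∈ cantorSet :=
    ⟨one_sub_mem_cantorSet, fun h => by simpa using one_sub_mem_cantorSet h⟩
  simp only [mem_union, mem_image, mem_neg, neg_sub, ← eq_sub_iff_add_eq, exists_eq_right, hC]
  exact or_comm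

theorem stmt9 :
    LipschitzEquivalent (cantorSet ∪ (fun x => x + 1) '' cantorSet) cantorSet := by
  refine lipschitzEquivalent_of_bilipschitzOn (f := fun x => cantorFold (x - 1)) (L := 18)
    (by norm_num) (fun x hx => cantorFold_mem (mem_union_image_add_one_iff.1 hx)) ?_ ?_
  · intro c hc
    obtain ⟨x, hx, rfl⟩ := surjOn_cantorFold hc
    exact ⟨x + 1, mem_union_image_add_one_iff.2 (by simpa using hx), by simp⟩
  · intro x hx y hy
    simpa [Real.dist_eq] using
      cantorFold_bilipschitz (mem_union_image_add_one_iff.1 hx) (mem_union_image_add_one_iff.1 hy)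
end

section
/- Let K ⊆ ℝ be the unique nonempty compact set satisfying K = S₁(K) ∪ S₂(K) ∪ S₃(K), where S₁(x) = x/5, S₂(x) = (4 − x)/5, S₃(x) = (x + 4)/5, and let K' ⊆ ℝ be the unique nonempty compact set satisfying K' = S'₁(K') ∪ S'₂(K') ∪ S'₃(K'), where S'ᵢ(x) = (x + 2(i − 1))/5 for i = 1, 2, 3. Then K is Lipschitz equivalent to K'. -/
/-!
Both sets are cones `{0} ∪ ⋃ₙ 5⁻ⁿ • P` over a base `P` bounded away from `0`. For `K'` the base is
`B = (K' + 2)/5 ∪ (K' + 4)/5`. For `K` it is `(2K' + 3)/5`: the two right branches of `K` form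
`(4 + (-K ∪ K))/5`, and `-K ∪ K = 2K' - 1` since both are attractors of `x ↦ (x + t)/5`,
`t ∈ {-4, 0, 4}`. A bi-Lipschitz bijection between bases extends level by level to the cones, so it
remains to see that `K'` is Lipschitz equivalent to the two pieces `B`, i.e. to `K' ∪ (K' + 2)`.
This is the same argument once more: `K' ∪ (K' + 2)` is the cone over `(K' + 4)/5 ∪ (K' + 2)`, and
this base is matched with `B` piece by piece through similarities.
-/

open Set Pointwise

section BiLipschitz

variable {E F G : Type*} [MetricSpace E] [MetricSpace F] [MetricSpace G]

def BiLipschitzOn (L : ℝ) (f : E → F) (X : Set E) : Prop :=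
  ∀ x ∈ X, ∀ y ∈ X, dist x y ≤ L * dist (f x) (f y) ∧ dist (f x) (f y) ≤ L * dist x y

namespace BiLipschitzOn

variable {L L' : ℝ} {f : E → F} {X X' : Set E}

theorem mono_const (h : BiLipschitzOn L f X) (hLL' : L ≤ L') :
    BiLipschitzOn L' f X := fun x hx y hy =>
  ⟨(h x hx y hy).1.trans (by gcongr), (h x hx y hy).2.trans (by gcongr)⟩

theorem congr {g : E → F} (h : BiLipschitzOn L f X) (hfg : EqOn f g X) :
    BiLipschitzOn L g X := by
  intro x hx y hy
  rw [← hfg hx, ← hfg hy]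
  exact h x hx y hy

theorem injOn (h : BiLipschitzOn L f X) : InjOn f X := fun x hx y hy hxy =>
  dist_le_zero.1 <| by simpa [hxy] using (h x hx y hy).1

theorem comp {g : F → G} {Y : Set F} (hg : BiLipschitzOn L' g Y) (hf : BiLipschitzOn L f X)
    (hL : 0 ≤ L) (hL' : 0 ≤ L') (hXY : MapsTo f X Y) : BiLipschitzOn (L * L') (g ∘ f) X := by
  intro x hx y hy
  have hg' := hg _ (hXY hx) _ (hXY hy)
  have hf' := hf x hx y hy
  constructor
  · calc dist x y ≤ L * dist (f x) (f y) := hf'.1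
      _ ≤ L * (L' * dist (g (f x)) (g (f y))) := by gcongr; exact hg'.1
      _ = L * L' * dist (g (f x)) (g (f y)) := (mul_assoc ..).symm
  · calc dist (g (f x)) (g (f y)) ≤ L' * dist (f x) (f y) := hg'.2
      _ ≤ L' * (L * dist x y) := by gcongr; exact hf'.2
      _ = L * L' * dist x y := by ring

theorem union (h : BiLipschitzOn L f X) (h' : BiLipschitzOn L f X')
    (hXX' : ∀ x ∈ X, ∀ y ∈ X',
      dist x y ≤ L * dist (f x) (f y) ∧ dist (f x) (f y) ≤ L * dist x y) :
    BiLipschitzOn L f (X ∪ X') := by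
  rintro x (hx | hx) y (hy | hy)
  · exact h x hx y hy
  · exact hXX' x hx y hy
  · simpa only [dist_comm] using hXX' y hy x hx
  · exact h' x hx y hy

end BiLipschitzOn

theorem lipschitzEquivalent_iff_exists_bijOn [Nonempty F] {X : Set E} {Y : Set F} :
    LipschitzEquivalent X Y ↔ ∃ f : E → F, ∃ L, 0 < L ∧ BijOn f X Y ∧ BiLipschitzOn L f X := by
  classical
  constructor
  · rintro ⟨f, L, hL, hbij, hf⟩
    let f' : E → F := fun x => if hx : x ∈ X then f ⟨x, hx⟩ else Classical.arbitrary F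
    have hf' : ∀ x : X, f' x = f x := fun x => dif_pos x.2
    refine ⟨f', L, by positivity, ⟨fun x hx => ?_, fun x hx y hy hxy => ?_, fun y hy => ?_⟩, ?_⟩
    · simp [hf' ⟨x, hx⟩]
    · rw [hf' ⟨x, hx⟩, hf' ⟨y, hy⟩] at hxy
      exact congrArg Subtype.val (hbij.1 (Subtype.ext hxy))
    · obtain ⟨x, hx⟩ := hbij.2 ⟨y, hy⟩
      exact ⟨x, x.2, by rw [hf' x, hx]⟩
    · intro x hx y hy
      obtain ⟨h₁, h₂⟩ := hf ⟨x, hx⟩ ⟨y, hy⟩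
      rw [hf' ⟨x, hx⟩, hf' ⟨y, hy⟩]
      exact ⟨(inv_mul_le_iff₀ (by positivity)).1 h₁, h₂⟩
  · rintro ⟨f, L, hL, hbij, hf⟩
    refine ⟨hbij.mapsTo.restrict, max L 1, le_max_right _ _, hbij.bijective, fun x y => ?_⟩
    have hL1 : L ≤ max L 1 := le_max_left _ _
    obtain ⟨h₁, h₂⟩ := hf x x.2 y y.2
    refine ⟨(inv_mul_le_iff₀ (by positivity)).2 (h₁.trans ?_), h₂.trans (by gcongr)⟩
    exact mul_le_mul_of_nonneg_right hL1 dist_nonneg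

theorem le_mul_of_le_of_le {u w Δ δ L : ℝ} (hu0 : 0 ≤ u) (hδ : 0 < δ) (hL : Δ / δ ≤ L)
    (hu : u ≤ Δ) (hw : δ ≤ w) : u ≤ L * w :=
  calc u ≤ Δ / δ * δ := by rwa [div_mul_cancel₀ _ hδ.ne']
    _ ≤ L * w := by gcongr; exact (div_nonneg (hu0.trans hu) hδ.le).trans hL

namespace LipschitzEquivalent

theorem symm [Nonempty E] [Nonempty F] {X : Set E} {Y : Set F} (h : LipschitzEquivalent X Y) :
    LipschitzEquivalent Y X := by
  obtain ⟨f, L, hL, hbij, hf⟩ := lipschitzEquivalent_iff_exists_bijOn.1 h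
  have hinv := hbij.invOn_invFunOn
  have hbij' := hbij.symm hinv.symm
  refine lipschitzEquivalent_iff_exists_bijOn.2
    ⟨Function.invFunOn f X, L, hL, hbij', fun y hy y' hy' => ?_⟩
  have hfy := hf _ (hbij'.mapsTo hy) _ (hbij'.mapsTo hy')
  rwa [hinv.2 hy, hinv.2 hy', and_comm] at hfy

theorem trans [Nonempty F] [Nonempty G] {X : Set E} {Y : Set F} {Z : Set G}
    (h : LipschitzEquivalent X Y) (h' : LipschitzEquivalent Y Z) : LipschitzEquivalent X Z := by
  obtain ⟨f, L, hL, hf, hfL⟩ := lipschitzEquivalent_iff_exists_bijOn.1 h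
  obtain ⟨g, L', hL', hg, hgL⟩ := lipschitzEquivalent_iff_exists_bijOn.1 h'
  exact lipschitzEquivalent_iff_exists_bijOn.2 ⟨g ∘ f, L * L', by positivity, hg.comp hf,
    hgL.comp hfL hL.le hL'.le hf.mapsTo⟩

theorem union [Nonempty F] {X₁ X₂ : Set E} {Y₁ Y₂ : Set F} (h₁ : LipschitzEquivalent X₁ Y₁)
    (h₂ : LipschitzEquivalent X₂ Y₂) {δ Δ δ' Δ' : ℝ} (hδ : 0 < δ) (hδ' : 0 < δ')
    (hX : ∀ x ∈ X₁, ∀ x' ∈ X₂, dist x x' ∈ Icc δ Δ)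
    (hY : ∀ y ∈ Y₁, ∀ y' ∈ Y₂, dist y y' ∈ Icc δ' Δ') :
    LipschitzEquivalent (X₁ ∪ X₂) (Y₁ ∪ Y₂) := by
  classical
  obtain ⟨f₁, L₁, hL₁, hf₁, hf₁L⟩ := lipschitzEquivalent_iff_exists_bijOn.1 h₁
  obtain ⟨f₂, L₂, hL₂, hf₂, hf₂L⟩ := lipschitzEquivalent_iff_exists_bijOn.1 h₂
  have hX₂ : ∀ x ∈ X₂, x ∉ X₁ := fun x hx hx₁ => by
    simpa using (hδ.trans_le (hX x hx₁ x hx).1)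
  set f := X₁.piecewise f₁ f₂
  have hf₁' : EqOn f₁ f X₁ := fun x hx => (piecewise_eq_of_mem _ _ _ hx).symm
  have hf₂' : EqOn f₂ f X₂ := fun x hx => (piecewise_eq_of_notMem _ _ _ (hX₂ x hx)).symm
  set L := max (max L₁ L₂) (max (Δ / δ') (Δ' / δ))
  have hfL : BiLipschitzOn L f (X₁ ∪ X₂) := by
    refine BiLipschitzOn.union ?_ ?_ fun x hx y hy => ?_
    · exact (hf₁L.mono_const ((le_max_left _ _).trans (le_max_left _ _))).congr hf₁'
    · exact (hf₂L.mono_const ((le_max_right _ _).trans (le_max_left _ _))).congr hf₂'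
    · rw [← hf₁' hx, ← hf₂' hy]
      have hxy := hX x hx y hy
      have hfxy := hY _ (hf₁.mapsTo hx) _ (hf₂.mapsTo hy)
      exact ⟨le_mul_of_le_of_le dist_nonneg hδ' ((le_max_left _ _).trans (le_max_right _ _))
          hxy.2 hfxy.1,
        le_mul_of_le_of_le dist_nonneg hδ ((le_max_right _ _).trans (le_max_right _ _))
          hfxy.2 hxy.1⟩
  exact lipschitzEquivalent_iff_exists_bijOn.2 ⟨f, L,
    hL₁.trans_le ((le_max_left _ _).trans (le_max_left _ _)),
    (hf₁.congr hf₁').union (hf₂.congr hf₂') hfL.injOn, hfL⟩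

end LipschitzEquivalent

end BiLipschitz

section Affine

theorem lipschitzEquivalent_image_of_sub_eq {f : ℝ → ℝ} {a : ℝ} (ha : a ≠ 0)
    (hf : ∀ x y, f x - f y = a * (x - y)) (X : Set ℝ) : LipschitzEquivalent X (f '' X) := by
  have hdist : ∀ x y, dist (f x) (f y) = |a| * dist x y := fun x y => by
    rw [Real.dist_eq, Real.dist_eq, hf, abs_mul]
  have ha' : 0 < |a| := abs_pos.2 ha
  have hfL : BiLipschitzOn (max |a| |a|⁻¹) f X := fun x _ y _ => by
    refine ⟨?_, (hdist x y).trans_le (by gcongr; exact le_max_left _ _)⟩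
    calc dist x y = |a|⁻¹ * dist (f x) (f y) := by rw [hdist, inv_mul_cancel_left₀ ha'.ne']
      _ ≤ _ := by gcongr; exact le_max_right _ _
  exact lipschitzEquivalent_iff_exists_bijOn.2
    ⟨f, _, ha'.trans_le (le_max_left _ _), hfL.injOn.bijOn_image, hfL⟩

theorem lipschitzEquivalent_image_image_of_sub_eq {f g : ℝ → ℝ} {a b : ℝ} (ha : a ≠ 0)
    (hb : b ≠ 0) (hf : ∀ x y, f x - f y = a * (x - y)) (hg : ∀ x y, g x - g y = b * (x - y))
    (X : Set ℝ) : LipschitzEquivalent (f '' X) (g '' X) :=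
  (lipschitzEquivalent_image_of_sub_eq ha hf X).symm.trans
    (lipschitzEquivalent_image_of_sub_eq hb hg X)

theorem lipschitzWith_of_sub_eq {f : ℝ → ℝ} {a : ℝ} {c : NNReal} (ha : |a| = c)
    (hf : ∀ x y, f x - f y = a * (x - y)) : LipschitzWith c f :=
  LipschitzWith.of_dist_le_mul fun x y => by rw [Real.dist_eq, Real.dist_eq, hf, abs_mul, ha]

theorem image_div_eq_inv_smul (c : ℝ) (A : Set ℝ) : (· / c) '' A = c⁻¹ • A := by
  rw [← image_smul]
  simp only [smul_eq_mul, div_eq_inv_mul]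

theorem Real.dist_mem_Icc_of_mem_Icc {x y a b c d : ℝ} (hx : x ∈ Icc a b) (hy : y ∈ Icc c d)
    (hbc : b ≤ c) : dist x y ∈ Icc (c - b) (d - a) := by
  rw [Real.dist_eq, abs_of_nonpos (by linarith [hx.2, hy.1])]
  constructor <;> linarith [hx.1, hx.2, hy.1, hy.2]

end Affine

section Attractor

open Metric NNReal

variable {α ι : Type*} [MetricSpace α] {f : ι → α → α} {c : ℝ≥0}

theorem exists_dist_le_mul_hausdorffDist (hf : ∀ i, LipschitzWith c (f i))
    {A B : Set α} (hA : A ⊆ ⋃ i, f i '' A) (hB : IsCompact B) (hBne : B.Nonempty)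
    (hBf : ∀ i, MapsTo (f i) B B) (hAB : hausdorffEDist A B ≠ ⊤) :
    ∀ x ∈ A, ∃ y ∈ B, dist x y ≤ c * hausdorffDist A B := by
  intro x hx
  obtain ⟨i, a, ha, rfl⟩ := mem_iUnion.1 (hA hx)
  obtain ⟨b, hb, hab⟩ := hB.exists_infDist_eq_dist hBne a
  refine ⟨f i b, hBf i hb, (hf i).dist_le_mul a b |>.trans ?_⟩
  rw [← hab]
  gcongr
  exact infDist_le_hausdorffDist_of_mem ha hAB

theorem attractor_unique (hc : c < 1) (hf : ∀ i, LipschitzWith c (f i)) {A B : Set α}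
    (hA : IsCompact A) (hAne : A.Nonempty) (hB : IsCompact B) (hBne : B.Nonempty)
    (hAf : A = ⋃ i, f i '' A) (hBf : B = ⋃ i, f i '' B) : A = B := by
  have hAB : hausdorffEDist A B ≠ ⊤ :=
    hausdorffEDist_ne_top_of_nonempty_of_bounded hAne hBne hA.isBounded hB.isBounded
  have hmaps : ∀ {S : Set α}, S = ⋃ i, f i '' S → ∀ i, MapsTo (f i) S S := fun hS i x hx => by
    rw [hS]; exact mem_iUnion.2 ⟨i, mem_image_of_mem _ hx⟩
  have hle : hausdorffDist A B ≤ c * hausdorffDist A B := by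
    refine hausdorffDist_le_of_mem_dist (mul_nonneg c.2 hausdorffDist_nonneg)
      (exists_dist_le_mul_hausdorffDist hf hAf.subset hB hBne (hmaps hBf) hAB)
      fun y hy => ?_
    rw [hausdorffDist_comm]
    exact exists_dist_le_mul_hausdorffDist hf hBf.subset hA hAne (hmaps hAf)
      (by rwa [hausdorffEDist_comm]) y hy
  have hzero : hausdorffDist A B = 0 := by
    have : (c : ℝ) < 1 := hc
    nlinarith [hausdorffDist_nonneg (s := A) (t := B)]
  exact (hA.isClosed.hausdorffDist_zero_iff_eq hB.isClosed hAB).1 hzero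

theorem LipschitzWith.infDist_le_mul_infDist {g : α → α} (hg : LipschitzWith c g) {S : Set α}
    (hgS : MapsTo g S S) (x : α) : infDist (g x) S ≤ c * infDist x S := by
  rcases S.eq_empty_or_nonempty with rfl | hSne
  · simp
  refine le_of_forall_pos_lt_add fun ε hε => ?_
  have hδ : 0 < ε / (c + 1) := by positivity
  obtain ⟨p, hp, hxp⟩ := (infDist_lt_iff hSne).1 (lt_add_of_pos_right (infDist x S) hδ)
  calc infDist (g x) S ≤ dist (g x) (g p) := infDist_le_dist_of_mem (hgS hp)
    _ ≤ c * dist x p := hg.dist_le_mul x p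
    _ ≤ c * (infDist x S + ε / (c + 1)) := by gcongr
    _ < c * infDist x S + ε := by
      rw [mul_add, add_lt_add_iff_left, mul_div_assoc', div_lt_iff₀ (by positivity)]
      nlinarith

theorem attractor_subset_of_mapsTo (hc : c < 1) (hf : ∀ i, LipschitzWith c (f i)) {A S : Set α}
    (hA : IsCompact A) (hAf : A ⊆ ⋃ i, f i '' A) (hS : IsClosed S) (hSne : S.Nonempty)
    (hfS : ∀ i, MapsTo (f i) S S) : A ⊆ S := by
  rcases A.eq_empty_or_nonempty with rfl | hAne
  · exact empty_subset S
  obtain ⟨x₀, hx₀, hmax⟩ := hA.exists_isMaxOn hAne (continuous_infDist_pt S).continuousOn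
  have hx₀0 : infDist x₀ S ≤ 0 := by
    obtain ⟨i, a, ha, rfl⟩ := mem_iUnion.1 (hAf hx₀)
    have h1 : infDist a S ≤ infDist (f i a) S := hmax ha
    have : (c : ℝ) < 1 := hc
    nlinarith [(hf i).infDist_le_mul_infDist (hfS i) a, mul_le_mul_of_nonneg_left h1 c.2,
      infDist_nonneg (x := a) (s := S)]
  intro x hx
  rw [hS.mem_iff_infDist_zero hSne]
  exact le_antisymm ((hmax hx).trans hx₀0) infDist_nonneg

end Attractor

def geomCone (r : ℝ) (P : Set ℝ) : Set ℝ := insert 0 (⋃ n : ℕ, r ^ n • P)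

section GeomCone

variable {r a b a' b' : ℝ} {P Q : Set ℝ}

theorem mem_geomCone {x : ℝ} : x ∈ geomCone r P ↔ x = 0 ∨ ∃ n : ℕ, ∃ p ∈ P, r ^ n * p = x := by
  simp [geomCone, mem_smul_set]

theorem dist_pow_mul_zero_mem_Icc (hr0 : 0 < r) (hr1 : r < 1) (hab : r * b < a) {p : ℝ}
    (hp : p ∈ Icc a b) (n : ℕ) :
    dist (r ^ n * p) 0 ∈ Icc (r ^ n * (a - r * b)) (r ^ n * b) := by
  have hb : 0 < b := by nlinarith [hp.1, hp.2]
  have hrn : 0 < r ^ n := pow_pos hr0 n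
  have hlow : r ^ n * (a - r * b) ≤ r ^ n * p := by
    nlinarith [mul_le_mul_of_nonneg_left hp.1 hrn.le, mul_pos hr0 hb]
  rw [Real.dist_eq, sub_zero, abs_of_pos ((mul_pos hrn (sub_pos.2 hab)).trans_le hlow)]
  exact ⟨hlow, mul_le_mul_of_nonneg_left hp.2 hrn.le⟩

theorem dist_pow_mul_pow_mul_mem_Icc (hr0 : 0 < r) (hr1 : r < 1) (hab : r * b < a)
    {p q : ℝ} (hp : p ∈ Icc a b) (hq : q ∈ Icc a b) {n m : ℕ} (hnm : n < m) :
    dist (r ^ n * p) (r ^ m * q) ∈ Icc (r ^ n * (a - r * b)) (r ^ n * b) := by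
  have hb : 0 < b := by nlinarith [hq.1, hq.2]
  have hrm : r ^ m ≤ r ^ n * r := by
    rw [← pow_succ]; exact pow_le_pow_of_le_one hr0.le hr1.le hnm
  have hrn : 0 < r ^ n := pow_pos hr0 n
  have hrm0 : 0 < r ^ m := pow_pos hr0 m
  have hq0 : 0 ≤ q := by nlinarith [hq.1]
  have hlow : r ^ n * (a - r * b) ≤ r ^ n * p - r ^ m * q := by
    nlinarith [hp.1, hq.2, mul_le_mul_of_nonneg_right hrm hb.le,
      mul_le_mul_of_nonneg_left hq.2 hrm0.le]
  rw [Real.dist_eq, abs_of_pos ((mul_pos hrn (sub_pos.2 hab)).trans_le hlow)]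
  exact ⟨hlow, by nlinarith [mul_le_mul_of_nonneg_left hp.2 hrn.le, mul_nonneg hrm0.le hq0]⟩

theorem biLipschitzOn_geomCone {L : ℝ} {g G : ℝ → ℝ} (hr0 : 0 < r) (hr1 : r < 1)
    (hP : P ⊆ Icc a b) (hQ : Q ⊆ Icc a' b') (hab : r * b < a) (hab' : r * b' < a')
    (hg : BiLipschitzOn L g P) (hgPQ : MapsTo g P Q) (hG0 : G 0 = 0)
    (hG : ∀ n : ℕ, ∀ p ∈ P, G (r ^ n * p) = r ^ n * g p) :
    BiLipschitzOn (max L (max (b / (a' - r * b')) (b' / (a - r * b)))) G (geomCone r P) := by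
  set L' := max L (max (b / (a' - r * b')) (b' / (a - r * b)))
  have hcomparable : ∀ x y : ℝ, ∀ n : ℕ, dist x y ∈ Icc (r ^ n * (a - r * b)) (r ^ n * b) →
      dist (G x) (G y) ∈ Icc (r ^ n * (a' - r * b')) (r ^ n * b') →
      dist x y ≤ L' * dist (G x) (G y) ∧ dist (G x) (G y) ≤ L' * dist x y := by
    intro x y n hxy hGxy
    have hrn := pow_pos hr0 n
    refine ⟨le_mul_of_le_of_le dist_nonneg (mul_pos hrn (sub_pos.2 hab')) ?_ hxy.2 hGxy.1,
      le_mul_of_le_of_le dist_nonneg (mul_pos hrn (sub_pos.2 hab)) ?_ hGxy.2 hxy.1⟩ <;>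
      rw [mul_div_mul_left _ _ hrn.ne']
    exacts [(le_max_left _ _).trans (le_max_right _ _), (le_max_right _ _).trans (le_max_right _ _)]
  have hzero : ∀ n : ℕ, ∀ p ∈ P, dist (r ^ n * p) 0 ≤ L' * dist (G (r ^ n * p)) (G 0) ∧
      dist (G (r ^ n * p)) (G 0) ≤ L' * dist (r ^ n * p) 0 := fun n p hp =>
    hcomparable _ _ n (dist_pow_mul_zero_mem_Icc hr0 hr1 hab (hP hp) n) <| by
      rw [hG n p hp, hG0]; exact dist_pow_mul_zero_mem_Icc hr0 hr1 hab' (hQ (hgPQ hp)) n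
  have hlevels : ∀ n m : ℕ, n < m → ∀ p ∈ P, ∀ q ∈ P,
      dist (r ^ n * p) (r ^ m * q) ≤ L' * dist (G (r ^ n * p)) (G (r ^ m * q)) ∧
      dist (G (r ^ n * p)) (G (r ^ m * q)) ≤ L' * dist (r ^ n * p) (r ^ m * q) :=
    fun n m hnm p hp q hq =>
    hcomparable _ _ n (dist_pow_mul_pow_mul_mem_Icc hr0 hr1 hab (hP hp) (hP hq) hnm) <| by
      rw [hG n p hp, hG m q hq]
      exact dist_pow_mul_pow_mul_mem_Icc hr0 hr1 hab' (hQ (hgPQ hp)) (hQ (hgPQ hq)) hnm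
  intro x hx y hy
  rcases mem_geomCone.1 hx with rfl | ⟨n, p, hp, rfl⟩ <;>
    rcases mem_geomCone.1 hy with rfl | ⟨m, q, hq, rfl⟩
  · simp
  · simpa only [dist_comm] using hzero m q hq
  · exact hzero n p hp
  rcases lt_trichotomy n m with hnm | rfl | hnm
  · exact hlevels n m hnm p hp q hq
  · have hdist : ∀ x y, dist (r ^ n * x) (r ^ n * y) = r ^ n * dist x y := fun x y => by
      rw [Real.dist_eq, Real.dist_eq, ← mul_sub, abs_mul, abs_of_pos (pow_pos hr0 n)]
    rw [hG n p hp, hG n q hq, hdist, hdist]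
    obtain ⟨h₁, h₂⟩ := hg.mono_const (le_max_left L _) p hp q hq
    have hrn := (pow_pos hr0 n).le
    exact ⟨by rw [mul_left_comm]; gcongr, by rw [mul_left_comm]; gcongr⟩
  · simpa only [dist_comm] using hlevels m n hnm q hq p hp

theorem pow_mul_injective (hr0 : 0 < r) (hr1 : r < 1) (hab : r * b < a) (hP : P ⊆ Icc a b) :
    Function.Injective fun np : ℕ × P => r ^ np.1 * np.2 := by
  have hlevel : ∀ n m : ℕ, n < m → ∀ p ∈ P, ∀ q ∈ P, r ^ n * p ≠ r ^ m * q :=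
    fun n m hnm p hp q hq h => (mul_pos (pow_pos hr0 n) (sub_pos.2 hab)).not_ge <| by
      simpa [h] using (dist_pow_mul_pow_mul_mem_Icc hr0 hr1 hab (hP hp) (hP hq) hnm).1
  rintro ⟨n, p, hp⟩ ⟨m, q, hq⟩ (h : r ^ n * p = r ^ m * q)
  obtain rfl : n = m := by
    rcases lt_trichotomy n m with hnm | rfl | hnm
    · exact absurd h (hlevel n m hnm p hp q hq)
    · rfl
    · exact absurd h.symm (hlevel m n hnm q hq p hp)
  obtain rfl : p = q := mul_left_cancel₀ (pow_pos hr0 n).ne' h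
  rfl

theorem LipschitzEquivalent.geomCone (hr0 : 0 < r) (hr1 : r < 1)
    (hP : P ⊆ Icc a b) (hQ : Q ⊆ Icc a' b') (hab : r * b < a) (hab' : r * b' < a')
    (h : LipschitzEquivalent P Q) : LipschitzEquivalent (geomCone r P) (geomCone r Q) := by
  obtain ⟨g, L, hL, hg, hgL⟩ := lipschitzEquivalent_iff_exists_bijOn.1 h
  have hφ := pow_mul_injective hr0 hr1 hab hP
  set G := Function.extend (fun np : ℕ × P => r ^ np.1 * np.2) (fun np => r ^ np.1 * g np.2) 0
  have hG : ∀ n : ℕ, ∀ p ∈ P, G (r ^ n * p) = r ^ n * g p := fun n p hp =>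
    hφ.extend_apply _ _ (n, ⟨p, hp⟩)
  have hG0 : G 0 = 0 := by
    refine Function.extend_apply' _ _ _ ?_
    rintro ⟨⟨n, p, hp⟩, h : r ^ n * p = 0⟩
    exact (mul_pos (pow_pos hr0 n) (sub_pos.2 hab)).not_ge
      (by simpa [h] using (dist_pow_mul_zero_mem_Icc hr0 hr1 hab (hP hp) n).1)
  have hGL := biLipschitzOn_geomCone hr0 hr1 hP hQ hab hab' hgL hg.mapsTo hG0 hG
  refine lipschitzEquivalent_iff_exists_bijOn.2
    ⟨G, _, hL.trans_le (le_max_left _ _), ⟨?_, hGL.injOn, ?_⟩, hGL⟩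
  · intro x hx
    rcases mem_geomCone.1 hx with rfl | ⟨n, p, hp, rfl⟩
    · exact mem_geomCone.2 (Or.inl hG0)
    · exact mem_geomCone.2 (Or.inr ⟨n, g p, hg.mapsTo hp, (hG n p hp).symm⟩)
  · intro y hy
    rcases mem_geomCone.1 hy with rfl | ⟨n, q, hq, rfl⟩
    · exact ⟨0, mem_geomCone.2 (Or.inl rfl), hG0⟩
    · obtain ⟨p, hp, rfl⟩ := hg.surjOn hq
      exact ⟨r ^ n * p, mem_geomCone.2 (Or.inr ⟨n, p, hp, rfl⟩), hG n p hp⟩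

theorem zero_mem_of_smul_subset {A : Set ℝ} (hr1 : r < 1) (hA : IsCompact A) (hA0 : A ⊆ Ici 0)
    (hAne : A.Nonempty) (hrA : r • A ⊆ A) : (0 : ℝ) ∈ A := by
  obtain ⟨m, hm, hmin⟩ := hA.exists_isLeast hAne
  have : m ≤ r * m := hmin (hrA (smul_mem_smul_set hm))
  obtain rfl : m = 0 := by nlinarith [mem_Ici.1 (hA0 hm)]
  exact hm

theorem exists_eq_pow_mul_of_eq_smul_union {A : Set ℝ} (hrec : A = r • A ∪ P) (n : ℕ) {x : ℝ}
    (hx : x ∈ A) : (∃ k : ℕ, ∃ p ∈ P, r ^ k * p = x) ∨ ∃ y ∈ A, r ^ n * y = x := by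
  induction n generalizing x with
  | zero => exact Or.inr ⟨x, hx, one_mul x⟩
  | succ n ih =>
    rcases ih hx with h | ⟨y, hy, rfl⟩
    · exact Or.inl h
    rw [hrec] at hy
    rcases hy with ⟨z, hz, rfl⟩ | hy
    · exact Or.inr ⟨z, hz, by simp only [smul_eq_mul]; ring⟩
    · exact Or.inl ⟨n, y, hy, rfl⟩

theorem eq_geomCone {A : Set ℝ} (hr0 : 0 ≤ r) (hr1 : r < 1) (hA : IsCompact A)
    (hA0 : A ⊆ Ici 0) (hAne : A.Nonempty) (hrec : A = r • A ∪ P) : A = geomCone r P := by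
  have hrA : r • A ⊆ A := fun x hx => by rw [hrec]; exact Or.inl hx
  have hpowA : ∀ n : ℕ, ∀ x ∈ A, r ^ n * x ∈ A := by
    intro n
    induction n with
    | zero => exact fun x hx => by simpa using hx
    | succ n ih =>
      intro x hx
      simpa [pow_succ', mul_assoc] using hrA (smul_mem_smul_set (ih x hx))
  ext x
  refine ⟨fun hx => mem_geomCone.2 ?_, fun hx => ?_⟩
  · rcases (mem_Ici.1 (hA0 hx)).eq_or_lt with rfl | hx0
    · exact Or.inl rfl
    obtain ⟨M, hM⟩ := hA.isBounded.bddAbove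
    have hM0 : 0 ≤ M := hx0.le.trans (hM hx)
    obtain ⟨n, hn⟩ := exists_pow_lt_of_lt_one (div_pos hx0 (by positivity : (0 : ℝ) < M + 1)) hr1
    refine Or.inr ((exists_eq_pow_mul_of_eq_smul_union hrec n hx).resolve_right ?_)
    rintro ⟨y, hy, rfl⟩
    rw [lt_div_iff₀ (by positivity)] at hn
    nlinarith [mul_le_mul_of_nonneg_left (hM hy) (pow_nonneg hr0 n), pow_nonneg hr0 n]
  · rcases mem_geomCone.1 hx with rfl | ⟨n, p, hp, rfl⟩
    · exact zero_mem_of_smul_subset hr1 hA hA0 hAne hrA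
    · exact hpowA n p (by rw [hrec]; exact Or.inr hp)

end GeomCone

theorem iUnion_fin_three_image {α : Type*} (f₀ f₁ f₂ : α → α) (S : Set α) :
    ⋃ i, ![f₀, f₁, f₂] i '' S = f₀ '' S ∪ f₁ '' S ∪ f₂ '' S := by
  simp [iUnion_fin_add_one_eq_iUnion_succ, union_assoc]

section MiddleFifthsCantor

variable {K' : Set ℝ}

theorem cantor_subset_Icc (hK'c : IsCompact K')
    (hK' : K' = (· / 5) '' K' ∪ (fun x => (x + 2) / 5) '' K' ∪ (fun x => (x + 4) / 5) '' K') :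
    K' ⊆ Icc 0 1 := by
  refine attractor_subset_of_mapsTo (c := 5⁻¹)
    (f := ![(· / 5), fun x => (x + 2) / 5, fun x => (x + 4) / 5]) (by norm_num) ?_ hK'c
    (by rw [iUnion_fin_three_image]; exact hK'.subset) isClosed_Icc
    (nonempty_Icc.2 zero_le_one) ?_ <;>
  simp only [Fin.forall_fin_succ, Matrix.cons_val_zero, Matrix.cons_val_succ, IsEmpty.forall_iff,
    and_true]
  · exact ⟨lipschitzWith_of_sub_eq (a := 1 / 5) (by norm_num) fun x y => by ring,
      lipschitzWith_of_sub_eq (a := 1 / 5) (by norm_num) fun x y => by ring,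
      lipschitzWith_of_sub_eq (a := 1 / 5) (by norm_num) fun x y => by ring⟩
  · refine ⟨fun x hx => ?_, fun x hx => ?_, fun x hx => ?_⟩ <;>
      constructor <;> linarith [hx.1, hx.2]

theorem cantor_eq_geomCone (hK'c : IsCompact K') (hK'ne : K'.Nonempty)
    (hK' : K' = (· / 5) '' K' ∪ (fun x => (x + 2) / 5) '' K' ∪ (fun x => (x + 4) / 5) '' K') :
    K' = geomCone 5⁻¹ ((fun x => (x + 2) / 5) '' K' ∪ (fun x => (x + 4) / 5) '' K') := by
  refine eq_geomCone (by norm_num) (by norm_num) hK'c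
    ((cantor_subset_Icc hK'c hK').trans Icc_subset_Ici_self) hK'ne ?_
  conv_lhs => rw [hK']
  rw [← image_div_eq_inv_smul, union_assoc]

theorem cantor_images_subset_Icc (hK'c : IsCompact K')
    (hK' : K' = (· / 5) '' K' ∪ (fun x => (x + 2) / 5) '' K' ∪ (fun x => (x + 4) / 5) '' K') :
    (fun x => (x + 2) / 5) '' K' ⊆ Icc (2 / 5) (3 / 5) ∧
      (fun x => (x + 4) / 5) '' K' ⊆ Icc (4 / 5) 1 ∧ (· + 2) '' K' ⊆ Icc 2 3 := by
  have hK'01 := cantor_subset_Icc hK'c hK'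
  refine ⟨?_, ?_, ?_⟩ <;> rintro _ ⟨x, hx, rfl⟩ <;> constructor <;>
    linarith [(hK'01 hx).1, (hK'01 hx).2]

theorem cantor_union_translate_eq_geomCone (hK'c : IsCompact K') (hK'ne : K'.Nonempty)
    (hK' : K' = (· / 5) '' K' ∪ (fun x => (x + 2) / 5) '' K' ∪ (fun x => (x + 4) / 5) '' K') :
    K' ∪ (· + 2) '' K' = geomCone 5⁻¹ ((fun x => (x + 4) / 5) '' K' ∪ (· + 2) '' K') := by
  have hK'01 := cantor_subset_Icc hK'c hK'
  refine eq_geomCone (by norm_num) (by norm_num) (hK'c.union (hK'c.image (continuous_add_const 2)))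
    ?_ (hK'ne.mono subset_union_left) ?_
  · rintro _ (hx | ⟨x, hx, rfl⟩)
    · exact (hK'01 hx).1
    · exact add_nonneg (hK'01 hx).1 zero_le_two
  · nth_rewrite 1 [hK']
    rw [← image_div_eq_inv_smul, image_union, image_image]
    ring_nf
    ac_rfl

theorem lipschitzEquivalent_cantor_union_translate (hK'c : IsCompact K') (hK'ne : K'.Nonempty)
    (hK' : K' = (· / 5) '' K' ∪ (fun x => (x + 2) / 5) '' K' ∪ (fun x => (x + 4) / 5) '' K') :
    LipschitzEquivalent K' (K' ∪ (· + 2) '' K') := by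
  obtain ⟨h₂, h₄, h₂'⟩ := cantor_images_subset_Icc hK'c hK'
  rw [cantor_union_translate_eq_geomCone hK'c hK'ne hK']
  conv_lhs => rw [cantor_eq_geomCone hK'c hK'ne hK']
  refine LipschitzEquivalent.geomCone (a := 2 / 5) (b := 1) (a' := 4 / 5) (b' := 3)
    (by norm_num) (by norm_num) ?_ ?_ (by norm_num) (by norm_num) ?_
  · exact union_subset (h₂.trans (Icc_subset_Icc le_rfl (by norm_num)))
      (h₄.trans (Icc_subset_Icc (by norm_num) le_rfl))
  · exact union_subset (h₄.trans (Icc_subset_Icc le_rfl (by norm_num)))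
      (h₂'.trans (Icc_subset_Icc (by norm_num) le_rfl))
  · refine LipschitzEquivalent.union
      (lipschitzEquivalent_image_image_of_sub_eq (a := 1 / 5) (b := 1 / 5) (by norm_num)
        (by norm_num) (fun x y => by ring) (fun x y => by ring) K')
      (lipschitzEquivalent_image_image_of_sub_eq (a := 1 / 5) (b := 1) (by norm_num)
        (by norm_num) (fun x y => by ring) (fun x y => by ring) K') ?_ ?_
      (fun x hx x' hx' => Real.dist_mem_Icc_of_mem_Icc (h₂ hx) (h₄ hx') (by norm_num))
      (fun x hx x' hx' => Real.dist_mem_Icc_of_mem_Icc (h₄ hx) (h₂' hx') (by norm_num)) <;>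
    norm_num

theorem lipschitzEquivalent_cantor_pieces (hK'c : IsCompact K') (hK'ne : K'.Nonempty)
    (hK' : K' = (· / 5) '' K' ∪ (fun x => (x + 2) / 5) '' K' ∪ (fun x => (x + 4) / 5) '' K') :
    LipschitzEquivalent K' ((fun x => (x + 2) / 5) '' K' ∪ (fun x => (x + 4) / 5) '' K') := by
  have hB : (fun x => (x + 2) / 5) '' K' ∪ (fun x => (x + 4) / 5) '' K' =
      (fun x => (x + 2) / 5) '' (K' ∪ (· + 2) '' K') := by
    rw [image_union, image_image]; ring_nf
  rw [hB]
  exact (lipschitzEquivalent_cantor_union_translate hK'c hK'ne hK').trans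
    (lipschitzEquivalent_image_of_sub_eq (a := 1 / 5) (by norm_num) (fun x y => by ring) _)

end MiddleFifthsCantor

section FlippedCantor

variable {K K' : Set ℝ}

theorem flipped_subset_Icc (hKc : IsCompact K)
    (hK : K = (· / 5) '' K ∪ (fun x => (4 - x) / 5) '' K ∪ (fun x => (x + 4) / 5) '' K) :
    K ⊆ Icc 0 1 := by
  refine attractor_subset_of_mapsTo (c := 5⁻¹)
    (f := ![(· / 5), fun x => (4 - x) / 5, fun x => (x + 4) / 5]) (by norm_num) ?_ hKc
    (by rw [iUnion_fin_three_image]; exact hK.subset) isClosed_Icc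
    (nonempty_Icc.2 zero_le_one) ?_ <;>
  simp only [Fin.forall_fin_succ, Matrix.cons_val_zero, Matrix.cons_val_succ, IsEmpty.forall_iff,
    and_true]
  · exact ⟨lipschitzWith_of_sub_eq (a := 1 / 5) (by norm_num) fun x y => by ring,
      lipschitzWith_of_sub_eq (a := -1 / 5) (by norm_num) fun x y => by ring,
      lipschitzWith_of_sub_eq (a := 1 / 5) (by norm_num) fun x y => by ring⟩
  · refine ⟨fun x hx => ?_, fun x hx => ?_, fun x hx => ?_⟩ <;>
      constructor <;> linarith [hx.1, hx.2]

theorem neg_union_self_eq_image_cantor (hKc : IsCompact K) (hKne : K.Nonempty)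
    (hK : K = (· / 5) '' K ∪ (fun x => (4 - x) / 5) '' K ∪ (fun x => (x + 4) / 5) '' K)
    (hK'c : IsCompact K') (hK'ne : K'.Nonempty)
    (hK' : K' = (· / 5) '' K' ∪ (fun x => (x + 2) / 5) '' K' ∪ (fun x => (x + 4) / 5) '' K') :
    -K ∪ K = (fun y => 2 * y - 1) '' K' := by
  refine attractor_unique (c := 5⁻¹)
    (f := ![fun x => (x - 4) / 5, (· / 5), fun x => (x + 4) / 5]) (by norm_num) ?_
    (hKc.neg.union hKc) (hKne.mono subset_union_right)
    (hK'c.image (by fun_prop)) (hK'ne.image _) ?_ ?_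
  · simp only [Fin.forall_fin_succ, Matrix.cons_val_zero, Matrix.cons_val_succ, IsEmpty.forall_iff,
      and_true]
    exact ⟨lipschitzWith_of_sub_eq (a := 1 / 5) (by norm_num) fun x y => by ring,
      lipschitzWith_of_sub_eq (a := 1 / 5) (by norm_num) fun x y => by ring,
      lipschitzWith_of_sub_eq (a := 1 / 5) (by norm_num) fun x y => by ring⟩
  · rw [iUnion_fin_three_image]
    conv_lhs => rw [hK]
    simp only [image_union, ← image_neg_eq_neg, image_image]
    ring_nf
    ac_rfl
  · rw [iUnion_fin_three_image]
    conv_lhs => rw [hK']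
    simp only [image_union, image_image]
    ring_nf

theorem flipped_eq_geomCone (hKc : IsCompact K) (hKne : K.Nonempty)
    (hK : K = (· / 5) '' K ∪ (fun x => (4 - x) / 5) '' K ∪ (fun x => (x + 4) / 5) '' K)
    (hK'c : IsCompact K') (hK'ne : K'.Nonempty)
    (hK' : K' = (· / 5) '' K' ∪ (fun x => (x + 2) / 5) '' K' ∪ (fun x => (x + 4) / 5) '' K') :
    K = geomCone 5⁻¹ ((fun y => (2 * y + 3) / 5) '' K') := by
  refine eq_geomCone (by norm_num) (by norm_num) hKc
    ((flipped_subset_Icc hKc hK).trans Icc_subset_Ici_self) hKne ?_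
  have hP : (fun y => (2 * y + 3) / 5) '' K' =
      (fun x => (4 - x) / 5) '' K ∪ (fun x => (x + 4) / 5) '' K :=
    calc (fun y => (2 * y + 3) / 5) '' K'
        = (fun x => (x + 4) / 5) '' ((fun y => 2 * y - 1) '' K') := by rw [image_image]; ring_nf
      _ = (fun x => (x + 4) / 5) '' (-K ∪ K) := by
        rw [neg_union_self_eq_image_cantor hKc hKne hK hK'c hK'ne hK']
      _ = _ := by rw [image_union, ← image_neg_eq_neg, image_image]; ring_nf
  conv_lhs => rw [hK]
  rw [hP, union_assoc, image_div_eq_inv_smul]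

end FlippedCantor

theorem stmt10 (K K' : Set ℝ)
    (hKne : K.Nonempty) (hKcpt : IsCompact K)
    (hK : K = (fun x => x / 5) '' K ∪ (fun x => (4 - x) / 5) '' K ∪
              (fun x => (x + 4) / 5) '' K)
    (hK'ne : K'.Nonempty) (hK'cpt : IsCompact K')
    (hK' : K' = (fun x => (x + 2 * (1 - 1)) / 5) '' K' ∪
                (fun x => (x + 2 * (2 - 1)) / 5) '' K' ∪
                (fun x => (x + 2 * (3 - 1)) / 5) '' K') :
    LipschitzEquivalent K K' := by
  replace hK' : K' = (· / 5) '' K' ∪ (fun x => (x + 2) / 5) '' K' ∪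
      (fun x => (x + 4) / 5) '' K' := by norm_num at hK'; exact hK'
  have hP : (fun y => (2 * y + 3) / 5) '' K' ⊆ Icc (3 / 5) 1 := by
    rintro _ ⟨y, hy, rfl⟩
    have := cantor_subset_Icc hK'cpt hK' hy
    constructor <;> linarith [this.1, this.2]
  obtain ⟨h₂, h₄, -⟩ := cantor_images_subset_Icc hK'cpt hK'
  rw [flipped_eq_geomCone hKcpt hKne hK hK'cpt hK'ne hK']
  conv_rhs => rw [cantor_eq_geomCone hK'cpt hK'ne hK']
  refine LipschitzEquivalent.geomCone (by norm_num) (by norm_num) hP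
    (union_subset (h₂.trans (Icc_subset_Icc le_rfl (by norm_num)))
      (h₄.trans (Icc_subset_Icc (by norm_num) le_rfl))) (by norm_num) (by norm_num) ?_
  exact (lipschitzEquivalent_image_of_sub_eq (a := 2 / 5) (by norm_num) (fun x y => by ring)
    K').symm.trans (lipschitzEquivalent_cantor_pieces hK'cpt hK'ne hK')
end

section
/- Let (α_k)_{k≥1} be a sequence with α_k ∈ {−2, 0, 2} for all k, let α = Σ_{k=1}^∞ α_k·3^{−k}, and assume 0 < α < 1 and that this expansion is unique, i.e., every sequence (β_k)_{k≥1} with β_k ∈ {−2, 0, 2} and Σ_{k=1}^∞ β_k·3^{−k} = α satisfies β_k = α_k for all k. Then for every integer n ≥ 1 and all digit sequences i₁,…,i_n and j₁,…,j_n with i_k, j_k ∈ {0, 2}, the inequality |Σ_{k=1}^n (i_k − j_k)·3^{−k} − α| < 3^{−n} holds if and only if i_k − j_k = α_k for all 1 ≤ k ≤ n. -/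
/-!
Write `α = ∑_{k ≤ n} α_k 3^{-k} + T_n`, where `3^n T_n` is the value of the shifted digit
sequence `(α_{n+k})_{k ≥ 1}`, so `|T_n| ≤ 3^{-n}`. The bound is strict: `T_n = 3^{-n}` forces
every digit after position `n` to be `2`; then either all digits are `2` and `α = 1`, or the
last digit `c ≠ 2` before this tail admits the carry `c, 2, 2, … ↦ c + 2, -2, -2, …`,
a second expansion of `α`. The case `T_n = -3^{-n}` is the same after negating all digits.
This gives the "if" direction. For "only if", the finite sums `∑ (i_k - j_k) 3^{-k}` and
`∑ α_k 3^{-k}` are then closer than `2 · 3^{-n}`; halving the digit differences, this says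
`|∑_{k ≤ n} f_k 3^{n-k}| < 1` with `|f_k| < 3`, and such an integer sum vanishes only if every
`f_k` does (`f_n` is divisible by `3`, then induct).
-/

open Finset

noncomputable def ternaryValue (d : ℕ → ℤ) : ℝ :=
  ∑' k : ℕ, (d (k + 1) : ℝ) / 3 ^ (k + 1)

def IsDigitSeq (d : ℕ → ℤ) : Prop := ∀ k, 1 ≤ k → d k = -2 ∨ d k = 0 ∨ d k = 2

def HasUniqueExpansion (a : ℕ → ℤ) : Prop :=
  ∀ b, IsDigitSeq b → ternaryValue b = ternaryValue a → ∀ k, 1 ≤ k → b k = a k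

lemma IsDigitSeq.abs_le {d : ℕ → ℤ} (hd : IsDigitSeq d) (k : ℕ) (hk : 1 ≤ k) :
    |(d k : ℝ)| ≤ 2 := by
  rcases hd k hk with h | h | h <;> simp [h]

lemma IsDigitSeq.shift {d : ℕ → ℤ} (hd : IsDigitSeq d) (n : ℕ) :
    IsDigitSeq fun k => d (k + n) :=
  fun k hk => hd (k + n) (by omega)

lemma IsDigitSeq.neg {d : ℕ → ℤ} (hd : IsDigitSeq d) : IsDigitSeq (-d) := by
  intro k hk
  rcases hd k hk with h | h | h <;> simp [h]

lemma summable_ternary {d : ℕ → ℤ} {C : ℝ} (hd : ∀ k, 1 ≤ k → |(d k : ℝ)| ≤ C) :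
    Summable fun k : ℕ => (d (k + 1) : ℝ) / 3 ^ (k + 1) := by
  refine Summable.of_norm_bounded
    ((summable_geometric_of_lt_one (by norm_num) (by norm_num : (1 / 3 : ℝ) < 1)).mul_left C)
    fun k => ?_
  rw [Real.norm_eq_abs, abs_div, abs_of_pos (by positivity : (0 : ℝ) < 3 ^ (k + 1)), one_div_pow,
    ← div_eq_mul_one_div]
  calc |(d (k + 1) : ℝ)| / 3 ^ (k + 1) ≤ C / 3 ^ (k + 1) := by
        gcongr
        exact hd (k + 1) k.succ_pos
    _ ≤ C / 3 ^ k := by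
      gcongr
      · exact (abs_nonneg _).trans (hd 1 le_rfl)
      · norm_num
      · exact k.le_succ

lemma ternaryValue_neg (d : ℕ → ℤ) : ternaryValue (-d) = -ternaryValue d := by
  simp only [ternaryValue, Pi.neg_apply, Int.cast_neg, neg_div, tsum_neg]

lemma ternaryValue_eq_of_forall_eq {d : ℕ → ℤ} {c : ℤ} (h : ∀ k, 1 ≤ k → d k = c) :
    ternaryValue d = c / 2 := by
  have hgeom : ∀ k : ℕ, (d (k + 1) : ℝ) / 3 ^ (k + 1) = c / 3 * (1 / 3) ^ k := fun k => by
    rw [h (k + 1) k.succ_pos, pow_succ, one_div_pow]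
    field_simp
  rw [ternaryValue, tsum_congr hgeom, tsum_mul_left,
    tsum_geometric_of_lt_one (by norm_num) (by norm_num)]
  ring

lemma ternaryValue_eq_sum_add_shift {d : ℕ → ℤ} {C : ℝ}
    (hd : ∀ k, 1 ≤ k → |(d k : ℝ)| ≤ C) (n : ℕ) :
    ternaryValue d =
      ∑ k ∈ Icc 1 n, (d k : ℝ) / 3 ^ k + ternaryValue (fun k => d (k + n)) / 3 ^ n := by
  rw [ternaryValue, ← (summable_ternary hd).sum_add_tsum_nat_add n, ternaryValue,
    ← tsum_div_const]
  congr 1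
  · rw [range_eq_Ico, sum_Ico_add' (fun k => (d k : ℝ) / 3 ^ k), Ico_add_one_right_eq_Icc]
  · refine tsum_congr fun k => ?_
    rw [div_div, ← pow_add, add_right_comm k 1 n]

lemma ternaryValue_eq_head_add_tail {d : ℕ → ℤ} {C : ℝ}
    (hd : ∀ k, 1 ≤ k → |(d k : ℝ)| ≤ C) :
    ternaryValue d = (d 1 + ternaryValue fun k => d (k + 1)) / 3 := by
  rw [ternaryValue_eq_sum_add_shift hd 1, Icc_self, sum_singleton, pow_one, add_div]

lemma ternaryValue_lt_one {d : ℕ → ℤ} (hd : IsDigitSeq d) (h : ∃ k, 1 ≤ k ∧ d k ≠ 2) :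
    ternaryValue d < 1 := by
  obtain ⟨k, hk, hk2⟩ := h
  have hdk : d k ≤ 0 := by rcases hd k hk with h | h | h <;> omega
  have hone : ternaryValue (fun _ => 2) = 1 := by
    rw [ternaryValue_eq_of_forall_eq (c := 2) fun _ _ => rfl]
    norm_num
  rw [← hone]
  refine Summable.tsum_lt_tsum (i := k - 1) (fun j => ?_) ?_ (summable_ternary hd.abs_le)
    (summable_ternary (d := fun _ => 2) (C := 2) fun _ _ => by norm_num)
  · gcongr
    exact_mod_cast (abs_le.mp (hd.abs_le (j + 1) j.succ_pos)).2
  · rw [Nat.sub_add_cancel hk]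
    gcongr
    exact_mod_cast hdk.trans_lt two_pos

lemma not_hasUniqueExpansion_of_tail_eq_two {a : ℕ → ℤ} {m : ℕ} (ha : IsDigitSeq a)
    (hm : a (m + 1) ≠ 2) (htail : ∀ k, m + 1 < k → a k = 2) : ¬HasUniqueExpansion a := by
  set b : ℕ → ℤ := fun k => if k ≤ m then a k else if k = m + 1 then a (m + 1) + 2 else -2
    with hb_def
  have hb : IsDigitSeq b := by
    intro k hk
    simp only [hb_def]
    split_ifs with h1 h2
    · exact ha k hk
    · rcases ha (m + 1) (by omega) with h | h | h <;> omega
    · omega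
  have hb_top : b (m + 1) = a (m + 1) + 2 := by simp [hb_def]
  have hvalue : ternaryValue b = ternaryValue a := by
    have hshift_b : ternaryValue (fun k => b (k + (m + 1))) = -1 := by
      rw [ternaryValue_eq_of_forall_eq (c := -2) fun k hk => ?_]
      · norm_num
      · simp only [hb_def]
        rw [if_neg (by omega), if_neg (by omega)]
    have hshift_a : ternaryValue (fun k => a (k + (m + 1))) = 1 := by
      rw [ternaryValue_eq_of_forall_eq (c := 2) fun k hk => htail _ (by omega)]
      norm_num
    have hinit : ∑ k ∈ Icc 1 m, (b k : ℝ) / 3 ^ k = ∑ k ∈ Icc 1 m, (a k : ℝ) / 3 ^ k :=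
      sum_congr rfl fun k hk => by simp only [hb_def, if_pos (mem_Icc.mp hk).2]
    rw [ternaryValue_eq_sum_add_shift hb.abs_le (m + 1),
      ternaryValue_eq_sum_add_shift ha.abs_le (m + 1),
      sum_Icc_succ_top (by omega), sum_Icc_succ_top (by omega), hinit, hshift_b, hshift_a, hb_top]
    push_cast
    ring
  intro hu
  have := hu b hb hvalue (m + 1) (by omega)
  omega

lemma HasUniqueExpansion.ternaryValue_shift_lt_one {a : ℕ → ℤ} (ha : IsDigitSeq a)
    (hu : HasUniqueExpansion a) (h1 : ternaryValue a < 1) :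
    ∀ n, ternaryValue (fun k => a (k + n)) < 1
  | 0 => h1
  | n + 1 => by
    have ih := hu.ternaryValue_shift_lt_one ha h1 n
    by_contra hge
    have htail : ∀ k, n + 1 < k → a k = 2 := by
      by_contra! h
      obtain ⟨k, hk, hk2⟩ := h
      refine hge (ternaryValue_lt_one (ha.shift (n + 1)) ⟨k - (n + 1), by omega, ?_⟩)
      rwa [Nat.sub_add_cancel hk.le]
    by_cases h2 : a (n + 1) = 2
    · have hv : ternaryValue (fun k => a (k + (n + 1))) = 1 := by
        rw [ternaryValue_eq_of_forall_eq (c := 2) fun k hk => htail _ (by omega)]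
        norm_num
      have hstep := ternaryValue_eq_head_add_tail (ha.shift n).abs_le
      simp only [add_assoc, add_comm 1 n] at hstep
      rw [h2, hv] at hstep
      norm_num at hstep
      exact ih.ne hstep
    · exact not_hasUniqueExpansion_of_tail_eq_two ha h2 htail hu

lemma HasUniqueExpansion.neg {a : ℕ → ℤ} (hu : HasUniqueExpansion a) :
    HasUniqueExpansion (-a) := by
  intro b hb hba k hk
  have := hu (-b) hb.neg (by rw [ternaryValue_neg, hba, ternaryValue_neg, neg_neg]) k hk
  simp [← this]

lemma HasUniqueExpansion.abs_ternaryValue_shift_lt_one {a : ℕ → ℤ} (ha : IsDigitSeq a)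
    (hu : HasUniqueExpansion a) (h : |ternaryValue a| < 1) (n : ℕ) :
    |ternaryValue (fun k => a (k + n))| < 1 := by
  rw [abs_lt] at h ⊢
  refine ⟨?_, hu.ternaryValue_shift_lt_one ha h.2 n⟩
  have := hu.neg.ternaryValue_shift_lt_one ha.neg (by rw [ternaryValue_neg]; linarith) n
  rw [show (fun k => (-a) (k + n)) = -fun k => a (k + n) from rfl, ternaryValue_neg] at this
  linarith

lemma eq_zero_of_sum_mul_pow_sub_eq_zero {b : ℤ} {f : ℕ → ℤ} :
    ∀ {n : ℕ}, (∀ k ∈ Icc 1 n, |f k| < b) → ∑ k ∈ Icc 1 n, f k * b ^ (n - k) = 0 →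
      ∀ k ∈ Icc 1 n, f k = 0
  | 0, _, _, k, hk => by simp at hk
  | n + 1, hf, h, k, hk => by
    have hsplit : ∑ k ∈ Icc 1 (n + 1), f k * b ^ (n + 1 - k)
        = b * ∑ k ∈ Icc 1 n, f k * b ^ (n - k) + f (n + 1) := by
      rw [sum_Icc_succ_top (by omega), Nat.sub_self, pow_zero, mul_one, mul_sum]
      congr 1
      refine sum_congr rfl fun k hk => ?_
      rw [Nat.sub_add_comm (mem_Icc.mp hk).2, pow_succ]
      ring
    have hb : 0 < b := (abs_nonneg _).trans_lt (hf (n + 1) (by simp))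
    have hlast : f (n + 1) = 0 :=
      Int.eq_zero_of_abs_lt_dvd ⟨-∑ k ∈ Icc 1 n, f k * b ^ (n - k), by linarith⟩
        (hf _ (by simp))
    have hinit : ∑ k ∈ Icc 1 n, f k * b ^ (n - k) = 0 := by
      rw [hsplit, hlast, add_zero] at h
      exact (mul_eq_zero.mp h).resolve_left hb.ne'
    rcases (mem_Icc.mp hk).2.lt_or_eq with hkn | rfl
    · exact eq_zero_of_sum_mul_pow_sub_eq_zero
        (fun k hk => hf k (Icc_subset_Icc_right n.le_succ hk))
        hinit k (mem_Icc.mpr ⟨(mem_Icc.mp hk).1, by omega⟩)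
    · exact hlast

lemma sum_Icc_div_pow_eq (f : ℕ → ℤ) {b : ℤ} (hb : b ≠ 0) (n : ℕ) :
    ∑ k ∈ Icc 1 n, (f k : ℝ) / (b : ℝ) ^ k
      = ((∑ k ∈ Icc 1 n, f k * b ^ (n - k) : ℤ) : ℝ) / (b : ℝ) ^ n := by
  push_cast
  rw [sum_div]
  refine sum_congr rfl fun k hk => ?_
  field_simp
  rw [mul_assoc, ← pow_add, Nat.add_sub_cancel' (mem_Icc.mp hk).2]

lemma eq_zero_of_abs_sum_div_pow_lt {b : ℤ} (hb : 0 < b) {f : ℕ → ℤ} {n : ℕ}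
    (hf : ∀ k ∈ Icc 1 n, |f k| < b)
    (h : |∑ k ∈ Icc 1 n, (f k : ℝ) / (b : ℝ) ^ k| < 1 / (b : ℝ) ^ n) :
    ∀ k ∈ Icc 1 n, f k = 0 := by
  have hbR : (0 : ℝ) < b := by exact_mod_cast hb
  rw [sum_Icc_div_pow_eq f hb.ne' n, abs_div, abs_of_pos (pow_pos hbR n),
    div_lt_div_iff_of_pos_right (pow_pos hbR n)] at h
  exact eq_zero_of_sum_mul_pow_sub_eq_zero hf (Int.abs_lt_one_iff.mp (by exact_mod_cast h))

lemma eq_of_abs_sum_sub_sum_lt {d e : ℕ → ℤ} {n : ℕ}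
    (hd : ∀ k ∈ Icc 1 n, d k = -2 ∨ d k = 0 ∨ d k = 2)
    (he : ∀ k ∈ Icc 1 n, e k = -2 ∨ e k = 0 ∨ e k = 2)
    (h : |∑ k ∈ Icc 1 n, (d k : ℝ) / 3 ^ k - ∑ k ∈ Icc 1 n, (e k : ℝ) / 3 ^ k| <
      2 / 3 ^ n) :
    ∀ k ∈ Icc 1 n, d k = e k := by
  have hhalf : ∀ k ∈ Icc 1 n, d k - e k = 2 * ((d k - e k) / 2) ∧ |(d k - e k) / 2| < 3 :=
    fun k hk => by
      rcases hd k hk with h | h | h <;> rcases he k hk with h' | h' | h' <;> simp [h, h']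
  obtain ⟨f, hf2, hf3⟩ : ∃ f : ℕ → ℤ,
      (∀ k ∈ Icc 1 n, d k - e k = 2 * f k) ∧ ∀ k ∈ Icc 1 n, |f k| < 3 :=
    ⟨_, fun k hk => (hhalf k hk).1, fun k hk => (hhalf k hk).2⟩
  have hsum : ∑ k ∈ Icc 1 n, (d k : ℝ) / 3 ^ k - ∑ k ∈ Icc 1 n, (e k : ℝ) / 3 ^ k
      = 2 * ∑ k ∈ Icc 1 n, (f k : ℝ) / 3 ^ k := by
    rw [← sum_sub_distrib, mul_sum]
    refine sum_congr rfl fun k hk => ?_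
    rw [← sub_div, ← Int.cast_sub, hf2 k hk]
    push_cast
    ring
  rw [hsum, abs_mul, abs_two] at h
  have hzero := eq_zero_of_abs_sum_div_pow_lt (b := 3) (by norm_num) hf3
    (by push_cast; linarith [show (2 : ℝ) / 3 ^ n = 2 * (1 / 3 ^ n) by ring])
  intro k hk
  have := hf2 k hk
  rw [hzero k hk] at this
  omega

theorem stmt12 (a : ℕ → ℤ) (ha : ∀ k, 1 ≤ k → a k = -2 ∨ a k = 0 ∨ a k = 2)
    (α : ℝ) (hα : α = ∑' n : ℕ, (a (n + 1) : ℝ) / 3 ^ (n + 1))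
    (h0 : 0 < α) (h1 : α < 1)
    (huniq : ∀ b : ℕ → ℤ, (∀ k, 1 ≤ k → b k = -2 ∨ b k = 0 ∨ b k = 2) →
      (∑' n : ℕ, (b (n + 1) : ℝ) / 3 ^ (n + 1)) = α → ∀ k, 1 ≤ k → b k = a k) :
    ∀ n : ℕ, 1 ≤ n → ∀ i j : ℕ → ℤ,
      (∀ k, 1 ≤ k → k ≤ n → (i k = 0 ∨ i k = 2) ∧ (j k = 0 ∨ j k = 2)) →
      (|(∑ k ∈ Finset.Icc 1 n, ((i k - j k : ℤ) : ℝ) / 3 ^ k) - α| < 1 / 3 ^ n ↔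
        ∀ k, 1 ≤ k → k ≤ n → i k - j k = a k) := by
  change α = ternaryValue a at hα
  change IsDigitSeq a at ha
  subst hα
  have hu : HasUniqueExpansion a := huniq
  intro n _ i j hij
  rw [ternaryValue_eq_sum_add_shift ha.abs_le n]
  set S := ∑ k ∈ Icc 1 n, ((i k - j k : ℤ) : ℝ) / 3 ^ k
  set A := ∑ k ∈ Icc 1 n, (a k : ℝ) / 3 ^ k
  set T := ternaryValue (fun k => a (k + n)) / 3 ^ n
  have hT : |T| < 1 / 3 ^ n := by
    rw [abs_div, abs_of_pos (by positivity : (0 : ℝ) < 3 ^ n)]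
    gcongr
    exact hu.abs_ternaryValue_shift_lt_one ha (abs_lt.mpr ⟨by linarith, h1⟩) n
  constructor
  · intro h
    have hdigits : ∀ k ∈ Icc 1 n, i k - j k = -2 ∨ i k - j k = 0 ∨ i k - j k = 2 :=
      fun k hk => by
        obtain ⟨hi, hj⟩ := hij k (mem_Icc.mp hk).1 (mem_Icc.mp hk).2
        omega
    have hSA : |S - A| < 2 / 3 ^ n := calc
      |S - A| = |(S - (A + T)) + T| := by congr 1; ring
      _ ≤ |S - (A + T)| + |T| := abs_add_le _ _
      _ < 1 / 3 ^ n + 1 / 3 ^ n := add_lt_add h hT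
      _ = 2 / 3 ^ n := by ring
    have := eq_of_abs_sum_sub_sum_lt hdigits (fun k hk => ha k (mem_Icc.mp hk).1) hSA
    exact fun k hk1 hkn => this k (mem_Icc.mpr ⟨hk1, hkn⟩)
  · intro h
    have hSA : S = A := sum_congr rfl fun k hk => by rw [h k (mem_Icc.mp hk).1 (mem_Icc.mp hk).2]
    rwa [hSA, sub_add_cancel_left, abs_neg]
end
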